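/- arXiv:math/0501328 — 8 statements merged into one kernel-verified Lean document; each statement's English description precedes it below -/
import Mathlib

section
/- Fejér's theorem: let f : ℝ → ℂ be continuous and 2π-periodic, with Fourier coefficients c_k = (1/2π)∫₀^{2π} f(x) e^{−ikx} dx, partial sums s_n(x) = Σ_{k=−n}^{n} c_k e^{ikx}, and Cesàro means σ_n(f; x) = (s₀(x) + ⋯ + s_n(x))/(n+1). Then σ_n(f; ·) converges to f uniformly on ℝ as n → ∞. -/
/-!
The Fejér mean `σₙ f` is the convolution of `f` with the nonnegative kernel
`|∑_{j ≤ n} e^{iju}|² / (n + 1)`, which has mass one for `dt / 2π`; hence `σₙ` does not increase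
the sup norm. For a trigonometric polynomial `p = ∑_{|k| ≤ m} a_k e^{ikx}` the partial sums `s_j p`
equal `p` once `j ≥ m`, so `‖σₙ p - p‖ ≤ 2m ∑ |a_k| / (n + 1)`. Trigonometric polynomials are
uniformly dense in the continuous `2π`-periodic functions, and an `ε/3` argument concludes.
-/

open Complex Finset Filter MeasureTheory
open scoped Real Topology

section Combinatorics

variable {M : Type*} [AddCommMonoid M]

theorem Finset.sum_Icc_neg_eq (φ : ℤ → M) (j : ℕ) :
    ∑ k ∈ Icc (-(j : ℤ)) j, φ k = ∑ a ∈ range j, φ (a - j) + ∑ i ∈ range (j + 1), φ i := by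
  have hIcc : ∑ i ∈ range (j + (j + 1)), φ (i - j) = ∑ k ∈ Icc (-(j : ℤ)) j, φ k := by
    refine sum_nbij' (fun i => i - j) (fun k => (k + j).toNat) ?_ ?_ ?_ ?_ fun _ _ => rfl <;>
      intro k hk <;> simp only [mem_Icc, mem_range] at hk ⊢ <;> omega
  rw [← hIcc, sum_range_add]
  simp

theorem Finset.sum_range_sum_Icc_neg_eq (φ : ℤ → M) (n : ℕ) :
    ∑ j ∈ range (n + 1), ∑ k ∈ Icc (-(j : ℤ)) j, φ k =
      ∑ a ∈ range (n + 1), ∑ b ∈ range (n + 1), φ (a - b) := by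
  induction n with
  | zero => simp
  | succ n ih =>
    have hreflect : ∑ b ∈ range (n + 2), φ ((n + 1 : ℕ) - b) = ∑ i ∈ range (n + 2), φ i := by
      rw [← sum_range_reflect]
      refine sum_congr rfl fun b hb => ?_
      rw [mem_range] at hb
      congr 1
      omega
    rw [sum_range_succ, ih, sum_Icc_neg_eq, ← hreflect]
    conv_rhs => rw [sum_range_succ]; enter [1, 2, a]; rw [sum_range_succ]
    rw [sum_add_distrib, add_assoc]

end Combinatorics

namespace Fejer

noncomputable section

def trigPoly (s : Finset ℤ) (a : ℤ → ℂ) (x : ℝ) : ℂ :=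
  ∑ k ∈ s, a k * exp (I * k * x)

def coeff (f : ℝ → ℂ) (k : ℤ) : ℂ :=
  (1 / (2 * π) : ℂ) * ∫ x in (0 : ℝ)..(2 * π), f x * exp (-I * k * x)

def partialSum (f : ℝ → ℂ) (n : ℕ) : ℝ → ℂ :=
  trigPoly (Icc (-(n : ℤ)) n) (coeff f)

def mean (f : ℝ → ℂ) (n : ℕ) (x : ℝ) : ℂ :=
  (∑ j ∈ range (n + 1), partialSum f j x) / (n + 1)

/-- `n + 1` times the Fejér kernel of order `n`. -/
def kernel (n : ℕ) (u : ℝ) : ℝ :=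
  normSq (∑ j ∈ range (n + 1), exp (I * j * u))

theorem ofReal_kernel (n : ℕ) (u : ℝ) :
    (kernel n u : ℂ) = ∑ j ∈ range (n + 1), ∑ k ∈ Icc (-(j : ℤ)) j, exp (I * k * u) := by
  rw [kernel, ← mul_conj, map_sum, sum_mul_sum, sum_range_sum_Icc_neg_eq]
  refine sum_congr rfl fun a _ => sum_congr rfl fun b _ => ?_
  rw [← exp_conj, ← exp_add]
  congr 1
  simp only [map_mul, conj_I, conj_natCast, conj_ofReal]
  push_cast
  ring

theorem kernel_nonneg (n : ℕ) (u : ℝ) : 0 ≤ kernel n u :=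
  normSq_nonneg _

@[fun_prop]
theorem continuous_kernel (n : ℕ) : Continuous (kernel n) := by
  unfold kernel
  fun_prop

theorem coeff_mul_exp (f : ℝ → ℂ) (k : ℤ) (x : ℝ) :
    coeff f k * exp (I * k * x) =
      (1 / (2 * π) : ℂ) * ∫ t in (0 : ℝ)..(2 * π), f t * exp (I * k * (x - t : ℝ)) := by
  rw [coeff, mul_assoc, ← intervalIntegral.integral_mul_const]
  congr 2 with t
  rw [mul_assoc, ← exp_add]
  push_cast
  ring_nf

theorem mean_eq_integral {f : ℝ → ℂ} (hf : Continuous f) (n : ℕ) (x : ℝ) :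
    mean f n x =
      (1 / (2 * π * (n + 1)) : ℂ) * ∫ t in (0 : ℝ)..(2 * π), f t * kernel n (x - t) := by
  have hint : ∀ k : ℤ, Continuous fun t : ℝ => f t * exp (I * k * (x - t : ℝ)) :=
    fun k => by fun_prop
  simp_rw [ofReal_kernel, mul_sum]
  rw [intervalIntegral.integral_finsetSum fun j _ =>
    (continuous_finsetSum _ fun k _ => hint k).intervalIntegrable _ _]
  simp_rw [intervalIntegral.integral_finsetSum fun k _ => (hint k).intervalIntegrable _ _]
  rw [mean]
  simp only [partialSum, trigPoly, coeff_mul_exp, ← mul_sum]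
  field_simp

theorem coeff_sub {f g : ℝ → ℂ} (hf : Continuous f) (hg : Continuous g) (k : ℤ) :
    coeff (f - g) k = coeff f k - coeff g k := by
  simp only [coeff, ← mul_sub, Pi.sub_apply, sub_mul]
  rw [intervalIntegral.integral_sub ((by fun_prop : Continuous _).intervalIntegrable _ _)
    ((by fun_prop : Continuous _).intervalIntegrable _ _)]

theorem mean_sub {f g : ℝ → ℂ} (hf : Continuous f) (hg : Continuous g) (n : ℕ) (x : ℝ) :
    mean (f - g) n x = mean f n x - mean g n x := by
  simp only [mean, partialSum, trigPoly, coeff_sub hf hg, sub_mul, sum_sub_distrib, sub_div]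

theorem integral_exp_mul_I (k : ℤ) :
    ∫ t in (0 : ℝ)..(2 * π), exp (I * k * t) = if k = 0 then (2 * π : ℂ) else 0 := by
  split_ifs with hk
  · simp [hk]
  · have hIk : I * k ≠ 0 := by simp [hk]
    have hperiod : exp (I * k * (2 * π)) = 1 := by
      rw [← exp_int_mul_two_pi_mul_I k]
      ring_nf
    simp [integral_exp_mul_complex hIk, hperiod]

theorem coeff_trigPoly (s : Finset ℤ) (a : ℤ → ℂ) (k : ℤ) :
    coeff (trigPoly s a) k = if k ∈ s then a k else 0 := by
  have hcont : ∀ l : ℤ, Continuous fun t : ℝ => a l * exp (I * l * t) * exp (-I * k * t) :=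
    fun l => by fun_prop
  simp only [coeff, trigPoly, sum_mul]
  rw [intervalIntegral.integral_finsetSum fun l _ => (hcont l).intervalIntegrable _ _]
  have hterm : ∀ l : ℤ, ∫ t in (0 : ℝ)..(2 * π), a l * exp (I * l * t) * exp (-I * k * t) =
      if k = l then a l * (2 * π) else 0 := by
    intro l
    have hexp : ∀ t : ℝ, a l * exp (I * l * t) * exp (-I * k * t) =
        a l * exp (I * ((l - k : ℤ) : ℂ) * t) := fun t => by
      rw [mul_assoc, ← exp_add]
      push_cast
      ring_nf
    simp_rw [hexp, intervalIntegral.integral_const_mul, integral_exp_mul_I, sub_eq_zero,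
      eq_comm (a := l), mul_ite, mul_zero]
  rw [sum_congr rfl fun l _ => hterm l, sum_ite_eq]
  split_ifs
  · field_simp
  · rw [mul_zero]

theorem partialSum_trigPoly (s : Finset ℤ) (a : ℤ → ℂ) (n : ℕ) :
    partialSum (trigPoly s a) n = trigPoly (Icc (-(n : ℤ)) n ∩ s) a := by
  ext x
  simp only [partialSum, trigPoly, coeff_trigPoly, ite_mul, zero_mul, sum_ite_mem]

theorem trigPoly_singleton_zero_one : trigPoly {0} (fun _ => 1) = 1 := by
  ext x
  simp [trigPoly]

theorem mean_one (n : ℕ) (x : ℝ) : mean 1 n x = 1 := by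
  have hpartial : ∀ j : ℕ, partialSum 1 j = 1 := by
    intro j
    rw [← trigPoly_singleton_zero_one, partialSum_trigPoly, inter_eq_right.2 (by simp)]
  simp only [mean, hpartial, Pi.one_apply, sum_const, card_range, nsmul_eq_mul, mul_one]
  push_cast
  exact div_self (Nat.cast_add_one_ne_zero n)

theorem integral_kernel (n : ℕ) (x : ℝ) :
    ∫ t in (0 : ℝ)..(2 * π), kernel n (x - t) = 2 * π * (n + 1) := by
  have h := mean_one n x
  rw [mean_eq_integral continuous_one] at h
  simp only [Pi.one_apply, one_mul] at h
  rw [intervalIntegral.integral_ofReal, one_div, inv_mul_eq_one₀ (by exact_mod_cast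
    (by positivity : (2 * π * (n + 1) : ℝ) ≠ 0))] at h
  exact_mod_cast h.symm

theorem norm_mean_le {f : ℝ → ℂ} (hf : Continuous f) {M : ℝ} (hM : ∀ t, ‖f t‖ ≤ M)
    (n : ℕ) (x : ℝ) : ‖mean f n x‖ ≤ M := by
  have hbound : ‖∫ t in (0 : ℝ)..(2 * π), f t * kernel n (x - t)‖ ≤ M * (2 * π * (n + 1)) := by
    rw [← integral_kernel n x, ← intervalIntegral.integral_const_mul]
    refine intervalIntegral.norm_integral_le_of_norm_le (by positivity)
      (ae_of_all _ fun t _ => ?_) ((by fun_prop : Continuous _).intervalIntegrable _ _)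
    rw [norm_mul, norm_real, Real.norm_of_nonneg (kernel_nonneg n _)]
    exact mul_le_mul_of_nonneg_right (hM t) (kernel_nonneg n _)
  have hnorm : ‖(1 / (2 * π * (n + 1)) : ℂ)‖ = 1 / (2 * π * (n + 1)) := by
    norm_cast
    exact Real.norm_of_nonneg (by positivity)
  calc ‖mean f n x‖ ≤ 1 / (2 * π * (n + 1)) * (M * (2 * π * (n + 1))) := by
        rw [mean_eq_integral hf, norm_mul, hnorm]
        gcongr
    _ = M := by field_simp

theorem norm_trigPoly_le (s : Finset ℤ) (a : ℤ → ℂ) (x : ℝ) :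
    ‖trigPoly s a x‖ ≤ ∑ k ∈ s, ‖a k‖ :=
  (norm_sum_le _ _).trans_eq (sum_congr rfl fun k _ => by simp [norm_exp])

theorem partialSum_trigPoly_of_subset {s : Finset ℤ} {n : ℕ} (hs : s ⊆ Icc (-(n : ℤ)) n)
    (a : ℤ → ℂ) : partialSum (trigPoly s a) n = trigPoly s a := by
  rw [partialSum_trigPoly, inter_eq_right.2 hs]

theorem norm_partialSum_trigPoly_sub_le (s : Finset ℤ) (a : ℤ → ℂ) (n : ℕ) (x : ℝ) :
    ‖partialSum (trigPoly s a) n x - trigPoly s a x‖ ≤ 2 * ∑ k ∈ s, ‖a k‖ := by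
  have hpartial : ‖partialSum (trigPoly s a) n x‖ ≤ ∑ k ∈ s, ‖a k‖ := by
    rw [partialSum_trigPoly]
    exact (norm_trigPoly_le _ a x).trans
      (sum_le_sum_of_subset_of_nonneg inter_subset_right fun k _ _ => norm_nonneg _)
  linarith [norm_sub_le (partialSum (trigPoly s a) n x) (trigPoly s a x), norm_trigPoly_le s a x]

theorem norm_mean_trigPoly_sub_le {s : Finset ℤ} {m : ℕ} (hs : s ⊆ Icc (-(m : ℤ)) m)
    (a : ℤ → ℂ) {n : ℕ} (hmn : m ≤ n + 1) (x : ℝ) :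
    ‖mean (trigPoly s a) n x - trigPoly s a x‖ ≤ 2 * m * (∑ k ∈ s, ‖a k‖) / (n + 1) := by
  set p := trigPoly s a
  have hvanish : ∑ j ∈ range (n + 1), (partialSum p j x - p x) =
      ∑ j ∈ range m, (partialSum p j x - p x) := by
    refine (sum_subset (range_subset_range.2 hmn) fun j _ hj => ?_).symm
    have hsj : s ⊆ Icc (-(j : ℤ)) j := hs.trans (Icc_subset_Icc (by simp_all) (by simp_all))
    rw [partialSum_trigPoly_of_subset hsj, sub_self]
  have hsplit : mean p n x - p x = (∑ j ∈ range m, (partialSum p j x - p x)) / (n + 1) := by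
    rw [← hvanish, sum_sub_distrib, sum_const, card_range, nsmul_eq_mul, sub_div, mean]
    push_cast
    rw [mul_div_cancel_left₀ _ (Nat.cast_add_one_ne_zero n)]
  have hnum : ‖∑ j ∈ range m, (partialSum p j x - p x)‖ ≤ m * (2 * ∑ k ∈ s, ‖a k‖) := by
    calc ‖∑ j ∈ range m, (partialSum p j x - p x)‖ ≤ ∑ j ∈ range m, 2 * ∑ k ∈ s, ‖a k‖ :=
          (norm_sum_le _ _).trans (sum_le_sum fun j _ => norm_partialSum_trigPoly_sub_le s a j x)
      _ = m * (2 * ∑ k ∈ s, ‖a k‖) := by simp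
  have hden : ‖(n + 1 : ℂ)‖ = n + 1 := by exact_mod_cast norm_natCast (n + 1)
  rw [hsplit, norm_div, hden]
  gcongr
  linarith

theorem tendstoUniformly_mean_trigPoly (s : Finset ℤ) (a : ℤ → ℂ) :
    TendstoUniformly (mean (trigPoly s a)) (trigPoly s a) atTop := by
  obtain ⟨m, hm⟩ : ∃ m : ℕ, s ⊆ Icc (-(m : ℤ)) m :=
    ⟨s.sup Int.natAbs, fun k hk => by
      have := le_sup (f := Int.natAbs) hk
      simp only [mem_Icc]
      omega⟩
  have hbound : Tendsto (fun n : ℕ => 2 * m * (∑ k ∈ s, ‖a k‖) / (n + 1 : ℝ)) atTop (𝓝 0) := by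
    simpa [div_eq_mul_inv] using tendsto_one_div_add_atTop_nhds_zero_nat.const_mul
      (2 * m * ∑ k ∈ s, ‖a k‖)
  rw [Metric.tendstoUniformly_iff]
  intro ε hε
  filter_upwards [hbound.eventually (gt_mem_nhds hε), eventually_ge_atTop m] with n hn hmn x
  rw [dist_comm, dist_eq_norm]
  exact (norm_mean_trigPoly_sub_le hm a (by omega) x).trans_lt hn

theorem fourier_coe_eq_exp (k : ℤ) (x : ℝ) :
    fourier (T := 2 * π) k (x : AddCircle (2 * π)) = exp (I * k * x) := by
  rw [fourier_coe_apply]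
  congr 1
  push_cast
  field_simp

theorem exists_norm_sub_trigPoly_lt {f : ℝ → ℂ} (hf : Continuous f)
    (hper : Function.Periodic f (2 * π)) {ε : ℝ} (hε : 0 < ε) :
    ∃ (s : Finset ℤ) (a : ℤ → ℂ), ∀ x, ‖f x - trigPoly s a x‖ < ε := by
  have : Fact (0 < 2 * π) := ⟨by positivity⟩
  let F : C(AddCircle (2 * π), ℂ) := ⟨hper.lift, continuous_coinduced_dom.mpr hf⟩
  have hF : F ∈ closure
      (Submodule.span ℂ (Set.range (fourier (T := 2 * π))) : Set C(AddCircle (2 * π), ℂ)) := by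
    rw [← Submodule.topologicalClosure_coe, span_fourier_closure_eq_top]
    trivial
  obtain ⟨P, hP, hFP⟩ := Metric.mem_closure_iff.1 hF ε hε
  obtain ⟨a, rfl⟩ := Finsupp.mem_span_range_iff_exists_finsupp.1 hP
  refine ⟨a.support, a, fun x => ?_⟩
  have hPx :
      (a.sum fun k c => c • fourier k) (x : AddCircle (2 * π)) = trigPoly a.support a x := by
    simp only [Finsupp.sum, ContinuousMap.sum_apply, ContinuousMap.smul_apply, smul_eq_mul,
      fourier_coe_eq_exp, trigPoly]
  calc ‖f x - trigPoly a.support a x‖ = dist (F x) ((a.sum fun k c => c • fourier k) x) := by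
        rw [hPx, dist_eq_norm]
        rfl
    _ ≤ dist F (a.sum fun k c => c • fourier k) := ContinuousMap.dist_apply_le_dist _
    _ < ε := hFP

theorem tendstoUniformly_mean {f : ℝ → ℂ} (hf : Continuous f)
    (hper : Function.Periodic f (2 * π)) : TendstoUniformly (mean f) f atTop := by
  rw [Metric.tendstoUniformly_iff]
  intro ε hε
  obtain ⟨s, a, hfp⟩ := exists_norm_sub_trigPoly_lt hf hper (by positivity : 0 < ε / 3)
  have hp : Continuous (trigPoly s a) := by unfold trigPoly; fun_prop
  filter_upwards [Metric.tendstoUniformly_iff.1 (tendstoUniformly_mean_trigPoly s a) (ε / 3)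
    (by positivity)] with n hn x
  have hmean : ‖mean f n x - mean (trigPoly s a) n x‖ ≤ ε / 3 := by
    rw [← mean_sub hf hp]
    exact norm_mean_le (hf.sub hp) (fun t => (hfp t).le) n x
  calc dist (f x) (mean f n x)
      ≤ dist (f x) (trigPoly s a x) + dist (trigPoly s a x) (mean (trigPoly s a) n x) +
          dist (mean (trigPoly s a) n x) (mean f n x) := dist_triangle4 _ _ _ _
    _ < ε := by
      rw [dist_eq_norm, dist_eq_norm (mean _ n x), norm_sub_rev (mean _ n x)]
      linarith [hfp x, hn x]

end

end Fejer

/-- Fejér's theorem: the Cesàro means of the partial sums of the Fourier series of a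
continuous 2π-periodic function f : ℝ → ℂ converge to f uniformly on ℝ. -/
theorem fejer (f : ℝ → ℂ) (hf : Continuous f)
    (hper : ∀ x : ℝ, f (x + 2 * Real.pi) = f x)
    (c : ℤ → ℂ)
    (hc : ∀ k : ℤ, c k = (1 / (2 * Real.pi) : ℂ) *
      ∫ x in (0:ℝ)..(2 * Real.pi), f x * Complex.exp (-Complex.I * k * x))
    (s : ℕ → ℝ → ℂ)
    (hs : ∀ (n : ℕ) (x : ℝ), s n x =
      ∑ k ∈ Finset.Icc (-(n:ℤ)) (n:ℤ), c k * Complex.exp (Complex.I * k * x))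
    (σ : ℕ → ℝ → ℂ)
    (hσ : ∀ (n : ℕ) (x : ℝ), σ n x = (∑ j ∈ Finset.range (n + 1), s j x) / (n + 1)) :
    TendstoUniformly σ f Filter.atTop := by
  have hσ_eq : σ = Fejer.mean f := by
    ext n x
    simp only [hσ, hs, hc, Fejer.mean, Fejer.partialSum, Fejer.trigPoly, Fejer.coeff]
  exact hσ_eq ▸ Fejer.tendstoUniformly_mean hf hper
end

section
/- Bohman–Korovkin theorem: let (L_n) be a sequence of positive linear operators mapping C[a,b] into itself such that L_n(e_i) converges uniformly on [a,b] to e_i for i = 0, 1, 2, where e_i(x) = x^i. Then for every f ∈ C[a,b], L_n(f) converges uniformly on [a,b] to f. -/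
open Filter

/-- The monomial test functions on `[a,b]`. -/
def korE (a b : ℝ) (i : ℕ) : C(Set.Icc a b, ℝ) :=
  ⟨fun x : Set.Icc a b => (x : ℝ) ^ i, continuous_subtype_val.pow i⟩

set_option maxHeartbeats 1000000 in
/-- Bohman–Korovkin theorem: a sequence of positive linear operators on C[a,b] that
converges uniformly to the identity on 1, x, x² converges uniformly to the identity
on every continuous function. -/
theorem bohman_korovkin (a b : ℝ)
    (L : ℕ → C(Set.Icc a b, ℝ) →ₗ[ℝ] C(Set.Icc a b, ℝ))
    (hpos : ∀ (n : ℕ) (f : C(Set.Icc a b, ℝ)),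
      (∀ x, 0 ≤ f x) → ∀ x, 0 ≤ (L n f) x)
    (htest : ∀ i ≤ 2, TendstoUniformly
      (fun (n : ℕ) (x : Set.Icc a b) =>
        (L n ⟨fun x : Set.Icc a b => (x : ℝ) ^ i, continuous_subtype_val.pow i⟩) x)
      (fun x : Set.Icc a b => (x : ℝ) ^ i) Filter.atTop)
    (f : C(Set.Icc a b, ℝ)) :
    TendstoUniformly (fun (n : ℕ) (x : Set.Icc a b) => (L n f) x)
      (fun x : Set.Icc a b => f x) Filter.atTop := by
  have htest' : ∀ i ≤ 2, TendstoUniformly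
      (fun (n : ℕ) (x : Set.Icc a b) => (L n (korE a b i)) x)
      (fun x : Set.Icc a b => (x : ℝ) ^ i) Filter.atTop := htest
  -- monotonicity of each `L n`
  have hmono : ∀ (n : ℕ) (g h : C(Set.Icc a b, ℝ)), (∀ t, g t ≤ h t) →
      ∀ x, (L n g) x ≤ (L n h) x := by
    intro n g h hgh x
    have h0 := hpos n (h - g) (fun t => by
      simpa using sub_nonneg.2 (hgh t)) x
    rw [map_sub] at h0
    simp only [ContinuousMap.sub_apply] at h0
    linarith
  rw [Metric.tendstoUniformly_iff]
  intro ε' hε'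
  -- constants
  set M : ℝ := ‖f‖ with hMdef
  have hM0 : 0 ≤ M := norm_nonneg f
  have hM : ∀ x, |f x| ≤ M := fun x => f.norm_coe_le_norm x
  set C : ℝ := max |a| |b| with hCdef
  have hC0 : 0 ≤ C := le_trans (abs_nonneg a) (le_max_left _ _)
  have hC : ∀ x : Set.Icc a b, |(x : ℝ)| ≤ C := fun x =>
    abs_le_max_abs_abs x.2.1 x.2.2
  -- uniform continuity
  have huc : UniformContinuous f := CompactSpace.uniformContinuous_of_continuous f.continuous
  rw [Metric.uniformContinuous_iff] at huc
  obtain ⟨δ, hδ0, hδ⟩ := huc (ε' / 4) (by linarith)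
  set ε : ℝ := ε' / 4 with hεdef
  have hε0 : 0 < ε := by positivity
  set K : ℝ := 2 * M / δ ^ 2 with hKdef
  have hK0 : 0 ≤ K := by positivity
  set S : ℝ := K * (1 + 2 * C + C ^ 2) + M with hSdef
  have hS0 : 0 ≤ S := by
    have : 0 ≤ K * (1 + 2 * C + C ^ 2) := by nlinarith
    linarith
  set η : ℝ := ε' / (4 * (S + 2)) with hηdef
  have hη0 : 0 < η := by
    have : 0 < 4 * (S + 2) := by linarith
    positivity
  set η' : ℝ := min η 1 with hη'def
  have hη'0 : 0 < η' := lt_min hη0 one_pos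
  have hη'1 : η' ≤ 1 := min_le_right _ _
  have hη'η : η' ≤ η := min_le_left _ _
  -- eventual closeness of test functions
  have h0 := htest' 0 (by norm_num)
  have h1 := htest' 1 (by norm_num)
  have h2 := htest' 2 (by norm_num)
  rw [Metric.tendstoUniformly_iff] at h0 h1 h2
  filter_upwards [h0 η' hη'0, h1 η' hη'0, h2 η' hη'0] with n hn0 hn1 hn2
  intro x
  -- abbreviations
  set A0 : ℝ := (L n (korE a b 0)) x with hA0def
  set A1 : ℝ := (L n (korE a b 1)) x with hA1def
  set A2 : ℝ := (L n (korE a b 2)) x with hA2def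
  have hd0 : |1 - A0| < η' := by
    have := hn0 x
    rw [Real.dist_eq] at this
    simpa using this
  have hd1 : |(x : ℝ) - A1| < η' := by
    have := hn1 x
    rw [Real.dist_eq] at this
    simpa using this
  have hd2 : |(x : ℝ) ^ 2 - A2| < η' := by
    have := hn2 x
    rw [Real.dist_eq] at this
    simpa using this
  set c : ℝ := f x with hcdef
  -- the majorant h and the function g
  set h : C(Set.Icc a b, ℝ) :=
    (ε + K * (x : ℝ) ^ 2) • korE a b 0 - (2 * K * (x : ℝ)) • korE a b 1 + K • korE a b 2
    with hhdef
  have hpt : ∀ t : Set.Icc a b, h t = ε + K * ((t : ℝ) - (x : ℝ)) ^ 2 := by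
    intro t
    simp only [hhdef, ContinuousMap.add_apply, ContinuousMap.sub_apply,
      ContinuousMap.smul_apply, smul_eq_mul, korE, ContinuousMap.coe_mk]
    ring
  set g : C(Set.Icc a b, ℝ) := f - c • korE a b 0 with hgdef
  have hgt : ∀ t : Set.Icc a b, g t = f t - c := by
    intro t
    simp [hgdef, korE]
  -- pointwise bound |g t| ≤ h t
  have key : ∀ t : Set.Icc a b, |g t| ≤ h t := by
    intro t
    rw [hgt, hpt]
    have hft := hM t
    have hfx := hM x
    rw [abs_le] at hft hfx
    rcases lt_or_ge (dist t x) δ with hlt | hge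
    · have := hδ hlt
      rw [Real.dist_eq] at this
      have hsq : 0 ≤ K * ((t : ℝ) - (x : ℝ)) ^ 2 := mul_nonneg hK0 (sq_nonneg _)
      rw [abs_lt] at this
      rw [abs_le]
      constructor <;> linarith [this.1, this.2]
    · have hdist : dist t x = |(t : ℝ) - (x : ℝ)| := by
        rw [Subtype.dist_eq, Real.dist_eq]
      rw [hdist] at hge
      have hsq : δ ^ 2 ≤ ((t : ℝ) - (x : ℝ)) ^ 2 := by
        calc δ ^ 2 ≤ |(t : ℝ) - (x : ℝ)| ^ 2 := by
              exact pow_le_pow_left₀ hδ0.le hge 2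
          _ = ((t : ℝ) - (x : ℝ)) ^ 2 := sq_abs _
      have hKδ : K * δ ^ 2 = 2 * M := by
        rw [hKdef]
        field_simp
      have hKle : K * δ ^ 2 ≤ K * ((t : ℝ) - (x : ℝ)) ^ 2 :=
        mul_le_mul_of_nonneg_left hsq hK0
      rw [abs_le]
      constructor <;> nlinarith
  -- operator bound
  have hLg : |(L n g) x| ≤ (L n h) x := by
    rw [abs_le]
    constructor
    · have := hmono n (-h) g (fun t => by
        have := key t
        rw [abs_le] at this
        simpa using this.1) x
      rw [map_neg] at this
      simpa using this
    · exact hmono n g h (fun t => (abs_le.1 (key t)).2) x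
  -- compute L n h x
  have hLh : (L n h) x = (ε + K * (x : ℝ) ^ 2) * A0 - 2 * K * (x : ℝ) * A1 + K * A2 := by
    rw [hhdef, map_add, map_sub, map_smul, map_smul, map_smul]
    simp [ContinuousMap.add_apply, ContinuousMap.sub_apply, ContinuousMap.smul_apply,
      smul_eq_mul, hA0def, hA1def, hA2def]
  -- compute L n g x
  have hLgx : (L n g) x = (L n f) x - c * A0 := by
    rw [hgdef, map_sub, map_smul]
    simp [hA0def]
  -- bounds on pieces
  have habs1 : |(x : ℝ) * ((x : ℝ) - A1)| ≤ C * η' := by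
    rw [abs_mul]
    exact mul_le_mul (hC x) hd1.le (abs_nonneg _) hC0
  have habs2 : |(x : ℝ) ^ 2 * (1 - A0)| ≤ C ^ 2 * η' := by
    rw [abs_mul, abs_pow]
    exact mul_le_mul (pow_le_pow_left₀ (abs_nonneg _) (hC x) 2) hd0.le (abs_nonneg _)
      (by positivity)
  -- the T term
  have hT : (L n h) x ≤ ε * A0 + K * (η' + 2 * (C * η') + C ^ 2 * η') := by
    rw [hLh]
    have hTabs : |(A2 - (x : ℝ) ^ 2) - 2 * ((x : ℝ) * (A1 - (x : ℝ)))
        + (x : ℝ) ^ 2 * (A0 - 1)| ≤ η' + 2 * (C * η') + C ^ 2 * η' := by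
      have e2 : |A2 - (x : ℝ) ^ 2| ≤ η' := by rw [abs_sub_comm]; exact hd2.le
      have e1 : |(x : ℝ) * (A1 - (x : ℝ))| ≤ C * η' := by
        rw [show (A1 - (x : ℝ)) = -((x : ℝ) - A1) by ring, mul_neg, abs_neg]
        exact habs1
      have e0 : |(x : ℝ) ^ 2 * (A0 - 1)| ≤ C ^ 2 * η' := by
        rw [show (A0 - 1) = -(1 - A0) by ring, mul_neg, abs_neg]
        exact habs2
      calc |(A2 - (x : ℝ) ^ 2) - 2 * ((x : ℝ) * (A1 - (x : ℝ))) + (x : ℝ) ^ 2 * (A0 - 1)|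
          ≤ |(A2 - (x : ℝ) ^ 2) - 2 * ((x : ℝ) * (A1 - (x : ℝ)))| + |(x : ℝ) ^ 2 * (A0 - 1)| :=
            abs_add_le _ _
        _ ≤ |A2 - (x : ℝ) ^ 2| + |2 * ((x : ℝ) * (A1 - (x : ℝ)))| + |(x : ℝ) ^ 2 * (A0 - 1)| := by
            linarith [abs_sub (A2 - (x : ℝ) ^ 2) (2 * ((x : ℝ) * (A1 - (x : ℝ))))]
        _ ≤ η' + 2 * (C * η') + C ^ 2 * η' := by
            rw [abs_mul, abs_two]
            linarith
    have := (abs_le.1 hTabs).2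
    nlinarith [hK0]
  have hA0le : A0 ≤ 2 := by
    have := (abs_le.1 hd0.le).1
    linarith
  have hεA0 : ε * A0 ≤ 2 * ε := by nlinarith
  -- final estimate
  have hSη : S * η' ≤ ε' / 4 := by
    have h1 : S * η' ≤ S * η := mul_le_mul_of_nonneg_left hη'η hS0
    have h2 : S * η ≤ ε' / 4 := by
      rw [hηdef, ← mul_div_assoc, div_le_div_iff₀ (by linarith) (by norm_num)]
      nlinarith [hS0, hε'.le]
    exact le_trans h1 h2
  have hMd0 : M * |1 - A0| ≤ M * η' := mul_le_mul_of_nonneg_left hd0.le hM0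
  rw [Real.dist_eq]
  have hfinal : |f x - (L n f) x| ≤ (L n h) x + M * η' := by
    have heq : f x - (L n f) x = -((L n g) x + c * (A0 - 1)) := by
      rw [hLgx, hcdef]; ring
    rw [heq, abs_neg]
    calc |(L n g) x + c * (A0 - 1)| ≤ |(L n g) x| + |c * (A0 - 1)| := abs_add_le _ _
      _ ≤ (L n h) x + M * η' := by
          have : |c * (A0 - 1)| ≤ M * η' := by
            rw [abs_mul, show (A0 - 1) = -(1 - A0) by ring, abs_neg]
            exact mul_le_mul (hM x) hd0.le (abs_nonneg _) hM0
          linarith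
  have hKpart : K * (η' + 2 * (C * η') + C ^ 2 * η') + M * η' ≤ ε' / 4 := by
    have : K * (η' + 2 * (C * η') + C ^ 2 * η') + M * η' = S * η' := by
      rw [hSdef]; ring
    linarith [hSη, this ▸ hSη]
  have : |f x - (L n f) x| ≤ 2 * ε + ε' / 4 := by
    calc |f x - (L n f) x| ≤ (L n h) x + M * η' := hfinal
      _ ≤ ε * A0 + K * (η' + 2 * (C * η') + C ^ 2 * η') + M * η' := by linarith
      _ ≤ 2 * ε + ε' / 4 := by linarith
  have : |f x - (L n f) x| ≤ 3 * ε' / 4 := by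
    rw [hεdef] at this; linarith
  linarith
end

section
/- Müntz's theorem: let 0 ≤ λ₀ < λ₁ < λ₂ < ⋯ be an increasing sequence of real numbers tending to ∞. The linear span of the power functions x^{λ₀}, x^{λ₁}, x^{λ₂}, … is dense in C[0,1] with the uniform norm if and only if λ₀ = 0 and Σ_{k=1}^{∞} 1/λ_k = ∞. -/
open Set Filter Polynomial MeasureTheory

/-!
Sufficiency: for `0 < m < L`, the operator `e ↦ (L - m) x^L ∫_x^1 e(u) u^(-L-1) du` maps
`x^m - p`, with `p` a combination of powers `x^t`, `t > m`, to `x^m - p'` with `p'` a combination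
of the same powers and `x^L`, and it shrinks the sup norm on `[0,1]` by the factor `1 - m/L`.
Iterating, `x^m` is approximated within `∏ (1 - m/λₖ) ≤ exp (-m ∑ 1/λₖ)`, which is small when
`∑ 1/λₖ = ∞`; so every monomial lies in the closed span, and Weierstrass finishes.

Necessity: `λ₀ = 0`, since all `x^λₖ` with `λₖ > 0` vanish at `0`. Fix `m` outside `{λₖ}`.
Partial fractions (Lagrange interpolation at the nodes `-(t+1)`) produce a combination `g` of
`x^m` and finitely many `x^λₖ` with moments `∫₀¹ g(x) x^u dx = ∏ (u - λₖ) / ((u+m+1) ∏ (u+λₖ+1))`.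
So `g` is orthogonal to those `x^λₖ`, and Cauchy–Schwarz bounds the `L²` (hence the uniform)
distance from `x^m` to their span below by `∏ |m - λₖ| / (m + λₖ + 1) / √(2m+1)`. When
`∑ 1/λₖ < ∞` these products are bounded away from `0`, so `x^m` is not in the closure.
-/

theorem Lagrange.eval_div_eval_nodal {F ι : Type*} [Field F] [DecidableEq ι] {s : Finset ι}
    {v : ι → F} (hvs : Set.InjOn v s) {f : F[X]} (hf : f.degree < s.card) {x : F}
    (hx : ∀ i ∈ s, x ≠ v i) :
    f.eval x / (nodal s v).eval x = ∑ i ∈ s, nodalWeight s v i * f.eval (v i) / (x - v i) := by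
  conv_lhs => rw [eq_interpolate hvs hf]
  rw [eval_interpolate_not_at_node _ hx, mul_div_cancel_left₀ _ (eval_nodal_not_at_node hx)]
  exact Finset.sum_congr rfl fun i _ => by ring

namespace Muntz

theorem rpow_mul_integral_rpow {x a L : ℝ} (hx : 0 < x) (haL : a ≠ L) :
    x ^ L * ∫ u in x..1, u ^ (a - L - 1) = (x ^ L - x ^ a) / (a - L) := by
  have hsub : a - L ≠ 0 := sub_ne_zero.mpr haL
  rw [integral_rpow (Or.inr ⟨by contrapose! hsub; linarith, notMem_uIcc_of_lt hx one_pos⟩),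
    Real.one_rpow, sub_add_cancel, mul_div_assoc', mul_sub, mul_one, ← Real.rpow_add hx,
    add_sub_cancel]

theorem rpow_mul_integral_sub_sum {x m L : ℝ} (hx : 0 < x) (Λ : Finset ℝ) (a : ℝ → ℝ)
    (hmL : m ≠ L) (hL : L ∉ Λ) :
    x ^ L * ∫ u in x..1, (u ^ m - ∑ t ∈ Λ, a t * u ^ t) * u ^ (-L - 1) =
      (x ^ L - x ^ m) / (m - L) - ∑ t ∈ Λ, a t * ((x ^ L - x ^ t) / (t - L)) := by
  have hint : ∀ r : ℝ, IntervalIntegrable (fun u : ℝ => u ^ r) volume x 1 :=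
    fun r => intervalIntegral.intervalIntegrable_rpow (Or.inr (notMem_uIcc_of_lt hx one_pos))
  have hpow : ∀ u ∈ uIcc x 1, ∀ r : ℝ, u ^ r * u ^ (-L - 1) = u ^ (r - L - 1) := fun u hu r => by
    rw [← Real.rpow_add ((lt_min hx one_pos).trans_le hu.1)]; ring_nf
  rw [intervalIntegral.integral_congr
      (g := fun u => u ^ (m - L - 1) - ∑ t ∈ Λ, a t * u ^ (t - L - 1))
      fun u hu => by simp only [sub_mul, Finset.sum_mul, mul_assoc, hpow u hu],
    intervalIntegral.integral_sub (hint _) (by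
      simpa only [Finset.sum_fn] using
        IntervalIntegrable.sum Λ fun t _ => (hint (t - L - 1)).const_mul (a t)),
    intervalIntegral.integral_finsetSum fun t _ => (hint _).const_mul _, mul_sub,
    rpow_mul_integral_rpow hx hmL, Finset.mul_sum]
  congr 1
  refine Finset.sum_congr rfl fun t ht => ?_
  rw [intervalIntegral.integral_const_mul, mul_left_comm,
    rpow_mul_integral_rpow hx (ne_of_mem_of_not_mem ht hL)]

theorem sub_mul_rpow_mul_integral_sub_sum {x m L : ℝ} (hx : 0 < x) (Λ : Finset ℝ) (a : ℝ → ℝ)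
    (hmL : m ≠ L) (hL : L ∉ Λ) :
    (L - m) * (x ^ L * ∫ u in x..1, (u ^ m - ∑ t ∈ Λ, a t * u ^ t) * u ^ (-L - 1)) =
      x ^ m - (x ^ L - ∑ t ∈ Λ, a t * ((L - m) / (t - L)) * (x ^ t - x ^ L)) := by
  have hm : (L - m) * ((x ^ L - x ^ m) / (m - L)) = x ^ m - x ^ L := by
    field_simp [sub_ne_zero.mpr hmL]
    ring
  have hterm : ∀ t ∈ Λ, (L - m) * (a t * ((x ^ L - x ^ t) / (t - L))) =
      -(a t * ((L - m) / (t - L)) * (x ^ t - x ^ L)) := fun t _ => by ring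
  rw [rpow_mul_integral_sub_sum hx Λ a hmL hL, mul_sub, Finset.mul_sum, hm,
    Finset.sum_congr rfl hterm, Finset.sum_neg_distrib]
  ring

theorem abs_rpow_mul_integral_le {x L B : ℝ} {f : ℝ → ℝ} (hx : 0 < x) (hx1 : x ≤ 1) (hL : 0 < L)
    (hf : ContinuousOn f (Icc x 1)) (hB : ∀ u ∈ Icc x 1, |f u| ≤ B) :
    |x ^ L * ∫ u in x..1, f u * u ^ (-L - 1)| ≤ B / L := by
  have hpos : ∀ u ∈ Icc x 1, 0 < u := fun u hu => hx.trans_le hu.1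
  have hcont : ContinuousOn (fun u : ℝ => u ^ (-L - 1)) (Icc x 1) := fun u hu =>
    (Real.continuousAt_rpow_const u _ (Or.inl (hpos u hu).ne')).continuousWithinAt
  have hxL : 0 < x ^ L := Real.rpow_pos_of_pos hx L
  calc |x ^ L * ∫ u in x..1, f u * u ^ (-L - 1)|
      ≤ x ^ L * ∫ u in x..1, B * u ^ (-L - 1) := by
        rw [abs_mul, abs_of_pos hxL]
        refine mul_le_mul_of_nonneg_left ((intervalIntegral.abs_integral_le_integral_abs hx1).trans
          (intervalIntegral.integral_mono_on hx1 ?_ ?_ fun u hu => ?_)) hxL.le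
        · exact ((hf.mul hcont).abs).intervalIntegrable_of_Icc (μ := volume) hx1
        · exact (hcont.intervalIntegrable_of_Icc (μ := volume) hx1).const_mul B
        · rw [abs_mul, abs_of_pos (Real.rpow_pos_of_pos (hpos u hu) _)]
          exact mul_le_mul_of_nonneg_right (hB u hu) (Real.rpow_nonneg (hpos u hu).le _)
    _ = B * (1 - x ^ L) / L := by
        rw [intervalIntegral.integral_const_mul, mul_left_comm, ← zero_sub,
          rpow_mul_integral_rpow hx hL.ne, Real.rpow_zero, zero_sub, div_neg, ← neg_div, neg_sub,
          mul_div_assoc]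
    _ ≤ B / L := by
        have hB0 : 0 ≤ B := (abs_nonneg _).trans (hB x ⟨le_rfl, hx1⟩)
        exact div_le_div_of_nonneg_right (mul_le_of_le_one_right hB0 (by linarith)) hL.le

theorem exists_abs_rpow_sub_sum_le_prod {m : ℝ} (hm : 0 < m) (Λ : Finset ℝ) (hΛ : ∀ t ∈ Λ, m < t) :
    ∃ a : ℝ → ℝ, ∀ x ∈ Icc (0 : ℝ) 1,
      |x ^ m - ∑ t ∈ Λ, a t * x ^ t| ≤ ∏ t ∈ Λ, (1 - m / t) := by
  induction Λ using Finset.induction_on with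
  | empty =>
    refine ⟨0, fun x hx => ?_⟩
    simpa [abs_of_nonneg (Real.rpow_nonneg hx.1 m)] using Real.rpow_le_one hx.1 hx.2 hm.le
  | @insert L Λ hL ih =>
    obtain ⟨a, ha⟩ := ih fun t ht => hΛ t (Finset.mem_insert_of_mem ht)
    have hmL : m < L := hΛ L (Finset.mem_insert_self L Λ)
    have hΛpos : ∀ t ∈ insert L Λ, 0 < t := fun t ht => hm.trans (hΛ t ht)
    set b : ℝ → ℝ := fun t => a t * ((L - m) / (t - L))
    set a' := Function.update (fun t => -b t) L (1 + ∑ t ∈ Λ, b t) with ha'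
    refine ⟨a', fun x hx => ?_⟩
    have hsum : ∑ t ∈ insert L Λ, a' t * x ^ t = x ^ L - ∑ t ∈ Λ, b t * (x ^ t - x ^ L) := by
      have hrest : ∑ t ∈ Λ, a' t * x ^ t = ∑ t ∈ Λ, -b t * x ^ t :=
        Finset.sum_congr rfl fun t ht => by
          rw [ha', Function.update_of_ne (ne_of_mem_of_not_mem ht hL)]
      rw [Finset.sum_insert hL, hrest, ha', Function.update_self]
      simp only [mul_sub, Finset.sum_sub_distrib, ← Finset.sum_mul, neg_mul, Finset.sum_neg_distrib]
      ring
    have hB : 0 ≤ ∏ t ∈ Λ, (1 - m / t) := Finset.prod_nonneg fun t ht => by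
      have := hΛ t (Finset.mem_insert_of_mem ht)
      rw [sub_nonneg, div_le_one (hm.trans this)]; exact this.le
    rw [hsum, Finset.prod_insert hL]
    rcases hx.1.eq_or_lt with rfl | hx0
    · rw [Real.zero_rpow hm.ne', Real.zero_rpow (hΛpos L (Finset.mem_insert_self L Λ)).ne',
        Finset.sum_eq_zero fun t ht => by
          rw [Real.zero_rpow (hΛpos t (Finset.mem_insert_of_mem ht)).ne', sub_zero, mul_zero]]
      simpa using mul_nonneg (sub_nonneg.mpr ((div_le_one (hm.trans hmL)).mpr hmL.le)) hB
    have hcont : Continuous fun u : ℝ => u ^ m - ∑ t ∈ Λ, a t * u ^ t :=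
      (Real.continuous_rpow_const hm.le).sub (continuous_finsetSum _ fun t ht =>
        continuous_const.mul (Real.continuous_rpow_const
          (hΛpos t (Finset.mem_insert_of_mem ht)).le))
    have hstep := sub_mul_rpow_mul_integral_sub_sum hx0 Λ a hmL.ne hL
    rw [← hstep, abs_mul, abs_of_pos (sub_pos.mpr hmL)]
    calc (L - m) * |x ^ L * ∫ u in x..1, (u ^ m - ∑ t ∈ Λ, a t * u ^ t) * u ^ (-L - 1)|
        ≤ (L - m) * ((∏ t ∈ Λ, (1 - m / t)) / L) :=
          mul_le_mul_of_nonneg_left (abs_rpow_mul_integral_le hx0 hx.2 (hm.trans hmL)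
            hcont.continuousOn fun u hu => ha u ⟨hx.1.trans hu.1, hu.2⟩) (sub_pos.mpr hmL).le
      _ = (1 - m / L) * ∏ t ∈ Λ, (1 - m / t) := by
          field_simp [(hm.trans hmL).ne']

theorem sq_integral_mul_le {f g : ℝ → ℝ} {a b : ℝ} (hab : a ≤ b) (hf : ContinuousOn f (Icc a b))
    (hg : ContinuousOn g (Icc a b)) :
    (∫ x in a..b, f x * g x) ^ 2 ≤ (∫ x in a..b, f x ^ 2) * ∫ x in a..b, g x ^ 2 := by
  have hff : IntervalIntegrable (fun x => f x ^ 2) volume a b :=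
    (hf.pow 2).intervalIntegrable_of_Icc hab
  have hfg : IntervalIntegrable (fun x => f x * g x) volume a b :=
    (hf.mul hg).intervalIntegrable_of_Icc hab
  have hgg : IntervalIntegrable (fun x => g x ^ 2) volume a b :=
    (hg.pow 2).intervalIntegrable_of_Icc hab
  have hquad : ∀ r : ℝ, 0 ≤ (∫ x in a..b, f x ^ 2) * (r * r) + 2 * (∫ x in a..b, f x * g x) * r
      + ∫ x in a..b, g x ^ 2 := fun r => by
    have hnonneg : 0 ≤ ∫ x in a..b, (r * f x + g x) ^ 2 :=
      intervalIntegral.integral_nonneg hab fun x _ => sq_nonneg _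
    have hexpand : ∀ x, (r * f x + g x) ^ 2 = (r * r) * f x ^ 2 + (2 * r) * (f x * g x) + g x ^ 2 :=
      fun x => by ring
    simp only [hexpand] at hnonneg
    rw [intervalIntegral.integral_add ((hff.const_mul _).add (hfg.const_mul _)) hgg,
      intervalIntegral.integral_add (hff.const_mul _) (hfg.const_mul _),
      intervalIntegral.integral_const_mul, intervalIntegral.integral_const_mul] at hnonneg
    linarith
  have := discrim_le_zero hquad
  rw [discrim] at this
  linarith

theorem integral_rpow_mul_rpow {a b : ℝ} (ha : 0 ≤ a) (hb : 0 ≤ b) :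
    ∫ x in (0 : ℝ)..1, x ^ a * x ^ b = 1 / (a + b + 1) := by
  rw [intervalIntegral.integral_congr (g := fun x => x ^ (a + b)) fun x hx => by
      rw [uIcc_of_le zero_le_one] at hx
      exact (Real.rpow_add_of_nonneg hx.1 ha hb).symm,
    integral_rpow (Or.inl (by linarith)), Real.one_rpow,
    Real.zero_rpow (by linarith)]
  ring

theorem integral_mul_sum_rpow {g : ℝ → ℝ} (hg : ContinuousOn g (Icc 0 1)) {ι : Type*}
    (s : Finset ι) (b e : ι → ℝ) (he : ∀ i ∈ s, 0 ≤ e i) :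
    ∫ x in (0 : ℝ)..1, g x * ∑ i ∈ s, b i * x ^ e i =
      ∑ i ∈ s, b i * ∫ x in (0 : ℝ)..1, g x * x ^ e i := by
  have hint : ∀ i ∈ s, IntervalIntegrable (fun x => b i * (g x * x ^ e i)) volume 0 1 :=
    fun i hi => ((hg.mul (Real.continuous_rpow_const (he i hi)).continuousOn
      ).intervalIntegrable_of_Icc zero_le_one).const_mul _
  simp only [Finset.mul_sum, mul_left_comm (g _)]
  rw [intervalIntegral.integral_finsetSum hint]
  exact Finset.sum_congr rfl fun i _ => intervalIntegral.integral_const_mul _ _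

/-- The barycentric weights of Lagrange interpolation at the nodes `-(t + 1)`, chosen so that
`∑ t ∈ T, dualCoeff T N t / (u + t + 1) = N(u) / ∏ t ∈ T, (u + t + 1)` when `deg N < #T`. -/
noncomputable def dualCoeff (T : Finset ℝ) (N : ℝ[X]) (t : ℝ) : ℝ :=
  Lagrange.nodalWeight T (fun t => -(t + 1)) t * N.eval (-(t + 1))

theorem integral_sum_dualCoeff_mul_rpow {T : Finset ℝ} (hT : ∀ t ∈ T, 0 ≤ t) {N : ℝ[X]}
    (hN : N.degree < T.card) {u : ℝ} (hu : 0 ≤ u) :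
    ∫ x in (0 : ℝ)..1, (∑ t ∈ T, dualCoeff T N t * x ^ t) * x ^ u =
      N.eval u / ∏ t ∈ T, (u + t + 1) := by
  have hv : InjOn (fun t : ℝ => -(t + 1)) T := fun a _ b _ h => by simpa using h
  have hfrac := Lagrange.eval_div_eval_nodal hv hN fun t ht h => by linarith [hT t ht]
  simp only [Lagrange.eval_nodal, sub_neg_eq_add, ← add_assoc] at hfrac
  simp only [mul_comm _ (_ ^ u)]
  rw [integral_mul_sum_rpow (Real.continuous_rpow_const hu).continuousOn _ _ _ hT, hfrac]
  refine Finset.sum_congr rfl fun t ht => ?_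
  rw [integral_rpow_mul_rpow hu (hT t ht), dualCoeff]
  ring

noncomputable def muntzDual {ι : Type*} (s : Finset ι) (e : ι → ℝ) (m x : ℝ) : ℝ :=
  ∑ t ∈ insert m (s.image e), dualCoeff (insert m (s.image e)) (Lagrange.nodal s e) t * x ^ t

theorem continuous_muntzDual {ι : Type*} {s : Finset ι} {e : ι → ℝ} (he : ∀ i ∈ s, 0 ≤ e i)
    {m : ℝ} (hm : 0 ≤ m) : Continuous (muntzDual s e m) := by
  have hT : ∀ t ∈ insert m (s.image e), 0 ≤ t := by simpa [hm] using he
  exact continuous_finsetSum _ fun t ht =>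
    continuous_const.mul (Real.continuous_rpow_const (hT t ht))

theorem integral_muntzDual_mul_rpow {ι : Type*} {s : Finset ι} {e : ι → ℝ}
    (he : ∀ i ∈ s, 0 ≤ e i) (hinj : InjOn e s) {m : ℝ} (hm : 0 ≤ m) (hme : ∀ i ∈ s, e i ≠ m)
    {u : ℝ} (hu : 0 ≤ u) :
    ∫ x in (0 : ℝ)..1, muntzDual s e m x * x ^ u =
      (∏ i ∈ s, (u - e i)) / ((u + m + 1) * ∏ i ∈ s, (u + e i + 1)) := by
  have hmT : m ∉ s.image e := by simpa using hme
  have hN : (Lagrange.nodal s e).degree < (insert m (s.image e)).card := by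
    rw [Lagrange.degree_nodal, Finset.card_insert_of_notMem hmT, Finset.card_image_of_injOn hinj]
    exact_mod_cast Nat.lt_succ_self _
  have := integral_sum_dualCoeff_mul_rpow (by simpa [hm] using he) hN hu
  rwa [Finset.prod_insert hmT, Finset.prod_image hinj, Lagrange.eval_nodal] at this

theorem dualCoeff_insert_self {ι : Type*} {s : Finset ι} {e : ι → ℝ} (hinj : InjOn e s) {m : ℝ}
    (hme : ∀ i ∈ s, e i ≠ m) :
    dualCoeff (insert m (s.image e)) (Lagrange.nodal s e) m =
      ∏ i ∈ s, (m + e i + 1) / (m - e i) := by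
  rw [dualCoeff, Lagrange.nodalWeight, Finset.erase_insert (by simpa using hme),
    Finset.prod_image hinj, Lagrange.eval_nodal, ← Finset.prod_mul_distrib]
  refine Finset.prod_congr rfl fun i _ => ?_
  rw [show -(m + 1) - -(e i + 1) = -(m - e i) by ring,
    show -(m + 1) - e i = -(m + e i + 1) by ring, inv_neg, neg_mul_neg, div_eq_inv_mul]

theorem integral_muntzDual_mul_sub_sum {ι : Type*} {s : Finset ι} {e : ι → ℝ}
    (he : ∀ i ∈ s, 0 ≤ e i) (hinj : InjOn e s) {m : ℝ} (hm : 0 ≤ m) (hme : ∀ i ∈ s, e i ≠ m)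
    (b : ι → ℝ) :
    ∫ x in (0 : ℝ)..1, muntzDual s e m x * (x ^ m - ∑ i ∈ s, b i * x ^ e i) =
      (∏ i ∈ s, (m - e i)) / ((2 * m + 1) * ∏ i ∈ s, (m + e i + 1)) := by
  have hg := continuous_muntzDual he hm
  have hint : ∀ {h : ℝ → ℝ}, Continuous h →
      IntervalIntegrable (fun x => muntzDual s e m x * h x) volume 0 1 :=
    fun hh => (hg.mul hh).intervalIntegrable 0 1
  simp only [mul_sub]
  rw [intervalIntegral.integral_sub (hint (Real.continuous_rpow_const hm))
      (hint (h := fun x => ∑ i ∈ s, b i * x ^ e i) (continuous_finsetSum _ fun i hi =>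
        continuous_const.mul (Real.continuous_rpow_const (he i hi)))),
    integral_mul_sum_rpow hg.continuousOn s b e he,
    Finset.sum_eq_zero fun i hi => by
      rw [integral_muntzDual_mul_rpow he hinj hm hme (he i hi),
        Finset.prod_eq_zero hi (sub_self _), zero_div, mul_zero],
    sub_zero, integral_muntzDual_mul_rpow he hinj hm hme hm, two_mul]

theorem integral_muntzDual_sq {ι : Type*} {s : Finset ι} {e : ι → ℝ}
    (he : ∀ i ∈ s, 0 ≤ e i) (hinj : InjOn e s) {m : ℝ} (hm : 0 ≤ m) (hme : ∀ i ∈ s, e i ≠ m) :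
    ∫ x in (0 : ℝ)..1, muntzDual s e m x ^ 2 = 1 / (2 * m + 1) := by
  have hmT : m ∉ s.image e := by simpa using hme
  simp only [sq]
  conv_lhs => enter [1, x, 2]; rw [muntzDual]
  rw [integral_mul_sum_rpow (continuous_muntzDual he hm).continuousOn _ _ (fun t => t)
      (by simpa [hm] using he), Finset.sum_insert hmT, Finset.sum_image hinj,
    Finset.sum_eq_zero fun i hi => by
      rw [integral_muntzDual_mul_rpow he hinj hm hme (he i hi),
        Finset.prod_eq_zero hi (sub_self _), zero_div, mul_zero],
    add_zero, integral_muntzDual_mul_rpow he hinj hm hme hm, dualCoeff_insert_self hinj hme,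
    Finset.prod_div_distrib]
  have h1 : ∏ i ∈ s, (m - e i) ≠ 0 :=
    Finset.prod_ne_zero_iff.mpr fun i hi => sub_ne_zero.mpr (hme i hi).symm
  have h2 : ∏ i ∈ s, (m + e i + 1) ≠ 0 :=
    Finset.prod_ne_zero_iff.mpr fun i hi => by linarith [he i hi]
  field_simp
  ring

theorem prod_sq_div_le_integral_sq {ι : Type*} (s : Finset ι) (e : ι → ℝ) (he : ∀ i ∈ s, 0 ≤ e i)
    (hinj : InjOn e s) {m : ℝ} (hm : 0 ≤ m) (hme : ∀ i ∈ s, e i ≠ m) (b : ι → ℝ) :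
    (∏ i ∈ s, ((m - e i) / (m + e i + 1)) ^ 2) / (2 * m + 1) ≤
      ∫ x in (0 : ℝ)..1, (x ^ m - ∑ i ∈ s, b i * x ^ e i) ^ 2 := by
  have hf : Continuous fun x : ℝ => x ^ m - ∑ i ∈ s, b i * x ^ e i :=
    (Real.continuous_rpow_const hm).sub (continuous_finsetSum _ fun i hi =>
      continuous_const.mul (Real.continuous_rpow_const (he i hi)))
  have hCS := sq_integral_mul_le zero_le_one (continuous_muntzDual he hm).continuousOn
    hf.continuousOn
  rw [integral_muntzDual_mul_sub_sum he hinj hm hme, integral_muntzDual_sq he hinj hm hme] at hCS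
  have h2m : (0 : ℝ) < 2 * m + 1 := by linarith
  calc (∏ i ∈ s, ((m - e i) / (m + e i + 1)) ^ 2) / (2 * m + 1)
      = (2 * m + 1) * ((∏ i ∈ s, (m - e i)) / ((2 * m + 1) * ∏ i ∈ s, (m + e i + 1))) ^ 2 := by
        rw [Finset.prod_pow, Finset.prod_div_distrib]
        field_simp
    _ ≤ (2 * m + 1) * (1 / (2 * m + 1) * ∫ x in (0 : ℝ)..1, (x ^ m - ∑ i ∈ s, b i * x ^ e i) ^ 2) :=
        by gcongr
    _ = ∫ x in (0 : ℝ)..1, (x ^ m - ∑ i ∈ s, b i * x ^ e i) ^ 2 := by field_simp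

theorem tendsto_sum_Icc_one_atTop_iff {f : ℕ → ℝ} (hf : ∀ k, 0 ≤ f k) :
    Tendsto (fun n => ∑ k ∈ Finset.Icc 1 n, f k) atTop atTop ↔ ¬Summable f := by
  have hsplit : (fun n => ∑ k ∈ Finset.range (n + 1), f k) =
      fun n => f 0 + ∑ k ∈ Finset.Icc 1 n, f k := funext fun n => by
    rw [Finset.range_eq_Ico, Finset.sum_eq_sum_Ico_succ_bot (by omega : 0 < n + 1), zero_add,
      Finset.Ico_add_one_right_eq_Icc]
  rw [not_summable_iff_tendsto_nat_atTop_of_nonneg hf,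
    ← tendsto_add_atTop_iff_nat (f := fun n => ∑ k ∈ Finset.range n, f k) 1, hsplit]
  exact ⟨tendsto_atTop_add_const_left _ _,
    fun h => by simpa using tendsto_atTop_add_const_left _ (-f 0) h⟩

theorem prod_one_sub_le_exp_neg_sum {ι : Type*} (s : Finset ι) {y : ι → ℝ}
    (hy : ∀ i ∈ s, y i ≤ 1) : ∏ i ∈ s, (1 - y i) ≤ Real.exp (-∑ i ∈ s, y i) := by
  rw [← Finset.sum_neg_distrib, Real.exp_sum]
  exact Finset.prod_le_prod (fun i hi => sub_nonneg.2 (hy i hi))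
    fun i _ => Real.one_sub_le_exp_neg _

theorem exists_finset_prod_one_sub_div_lt {lam : ℕ → ℝ} (htop : Tendsto lam atTop atTop)
    (hdiv : ¬Summable fun k => 1 / lam k) {m : ℝ} (hm : 0 < m) {ε : ℝ} (hε : 0 < ε) :
    ∃ s : Finset ℕ, (∀ k ∈ s, m < lam k) ∧ ∏ k ∈ s, (1 - m / lam k) < ε := by
  obtain ⟨K, hK⟩ := eventually_atTop.1 (htop.eventually_gt_atTop m)
  have hKj : ∀ j, m < lam (j + K) := fun j => hK _ (Nat.le_add_left K j)
  have htail : Tendsto (fun n => ∑ j ∈ Finset.range n, 1 / lam (j + K)) atTop atTop :=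
    (not_summable_iff_tendsto_nat_atTop_of_nonneg fun j =>
      (one_div_pos.2 (hm.trans (hKj j))).le).1 ((summable_nat_add_iff K).not.2 hdiv)
  obtain ⟨n, hn⟩ := ((Real.tendsto_exp_neg_atTop_nhds_zero.comp
    (htail.const_mul_atTop hm)).eventually (gt_mem_nhds hε)).exists
  refine ⟨(Finset.range n).map (addRightEmbedding K), fun k hk => ?_, ?_⟩
  · obtain ⟨j, -, rfl⟩ := Finset.mem_map.1 hk
    exact hKj j
  · refine lt_of_le_of_lt ?_ hn
    rw [Finset.prod_map, Function.comp_apply, Finset.mul_sum]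
    simp only [addRightEmbedding_apply, mul_one_div]
    exact prod_one_sub_le_exp_neg_sum _ fun j _ =>
      (div_le_one (hm.trans (hKj j))).2 (hKj j).le

theorem exp_neg_tsum_le_prod {ι : Type*} {q : ι → ℝ} (hq0 : ∀ i, 0 < q i) (hq1 : ∀ i, q i ≤ 1)
    (hs : Summable fun i => (q i)⁻¹ - 1) (s : Finset ι) :
    Real.exp (-∑' i, ((q i)⁻¹ - 1)) ≤ ∏ i ∈ s, q i := by
  calc Real.exp (-∑' i, ((q i)⁻¹ - 1))
      ≤ Real.exp (-∑ i ∈ s, ((q i)⁻¹ - 1)) :=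
        Real.exp_le_exp.2 (neg_le_neg (hs.sum_le_tsum s fun i _ =>
          sub_nonneg.2 ((one_le_inv₀ (hq0 i)).2 (hq1 i))))
    _ ≤ Real.exp (∑ i ∈ s, Real.log (q i)) := by
        rw [← Finset.sum_neg_distrib]
        exact Real.exp_le_exp.2 (Finset.sum_le_sum fun i _ => by
          linarith [Real.one_sub_inv_le_log_of_pos (hq0 i)])
    _ = ∏ i ∈ s, q i := by
        rw [Real.exp_sum]
        exact Finset.prod_congr rfl fun i _ => Real.exp_log (hq0 i)

theorem summable_inv_sq_sub_one {lam : ℕ → ℝ} (htop : Tendsto lam atTop atTop)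
    (hsum : Summable fun k => 1 / lam k) {m : ℝ} (hm : 0 ≤ m) :
    Summable fun k => (((m - lam k) / (m + lam k + 1)) ^ 2)⁻¹ - 1 := by
  refine (hsum.mul_left (12 * (2 * m + 1))).of_norm_bounded_eventually_nat ?_
  filter_upwards [htop.eventually_ge_atTop (2 * m + 1)] with k hk
  have hl : 0 < lam k := by linarith
  have hkey : (((m - lam k) / (m + lam k + 1)) ^ 2)⁻¹ - 1 =
      (2 * m + 1) * (2 * lam k + 1) / (lam k - m) ^ 2 := by
    have : lam k - m ≠ 0 := by linarith
    have : m - lam k ≠ 0 := by linarith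
    field_simp
    ring
  have hsq : (lam k + 1) ^ 2 ≤ 4 * (lam k - m) ^ 2 := by nlinarith
  rw [hkey, Real.norm_of_nonneg (by positivity), div_le_iff₀ (by nlinarith), mul_one_div,
    div_mul_eq_mul_div, le_div_iff₀ hl]
  nlinarith [mul_le_mul_of_nonneg_left hsq (by linarith : (0 : ℝ) ≤ 2 * m + 1)]

def powSpan (lam : ℕ → ℝ) : Submodule ℝ C(Icc (0 : ℝ) 1, ℝ) :=
  Submodule.span ℝ {F | ∃ k : ℕ, ∀ x : Icc (0 : ℝ) 1, F x = (x : ℝ) ^ lam k}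

noncomputable def rpowIcc (a : ℝ) (ha : 0 ≤ a) : C(Icc (0 : ℝ) 1, ℝ) :=
  ⟨fun x => (x : ℝ) ^ a, continuous_subtype_val.rpow_const fun _ => Or.inr ha⟩

theorem rpowIcc_mem_powSpan (lam : ℕ → ℝ) (k : ℕ) (hk : 0 ≤ lam k) :
    rpowIcc (lam k) hk ∈ powSpan lam :=
  Submodule.subset_span ⟨k, fun _ => rfl⟩

theorem exists_sum_of_mem_powSpan {lam : ℕ → ℝ} (hpos : ∀ k, 0 ≤ lam k)
    {P : C(Icc (0 : ℝ) 1, ℝ)} (hP : P ∈ powSpan lam) :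
    ∃ (s : Finset ℕ) (c : ℕ → ℝ), ∀ x : Icc (0 : ℝ) 1, P x = ∑ k ∈ s, c k * (x : ℝ) ^ lam k := by
  have hS : {F : C(Icc (0 : ℝ) 1, ℝ) | ∃ k : ℕ, ∀ x : Icc (0 : ℝ) 1, F x = (x : ℝ) ^ lam k} =
      range fun k => rpowIcc (lam k) (hpos k) := by
    ext F
    exact ⟨fun ⟨k, hk⟩ => ⟨k, ContinuousMap.ext fun x => (hk x).symm⟩,
      fun ⟨k, hk⟩ => ⟨k, fun x => hk ▸ rfl⟩⟩
  rw [powSpan, hS, Finsupp.mem_span_range_iff_exists_finsupp] at hP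
  obtain ⟨c, rfl⟩ := hP
  exact ⟨c.support, c, fun x => by simp [Finsupp.sum, rpowIcc]⟩

theorem not_dense_powSpan_of_pos {lam : ℕ → ℝ} (hpos : ∀ k, 0 < lam k) :
    ¬Dense (powSpan lam : Set C(Icc (0 : ℝ) 1, ℝ)) := by
  intro hd
  let x₀ : Icc (0 : ℝ) 1 := ⟨0, left_mem_Icc.2 zero_le_one⟩
  let ev : C(Icc (0 : ℝ) 1, ℝ) →L[ℝ] ℝ := ContinuousMap.evalCLM ℝ x₀
  have hker : powSpan lam ≤ LinearMap.ker (ev : C(Icc (0 : ℝ) 1, ℝ) →ₗ[ℝ] ℝ) :=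
    Submodule.span_le.2 fun F ⟨k, hk⟩ => (hk x₀).trans (Real.zero_rpow (hpos k).ne')
  exact one_ne_zero (closure_minimal hker (ContinuousLinearMap.isClosed_ker ev) (hd 1))

theorem rpowIcc_mem_closure_powSpan {lam : ℕ → ℝ} (hinj : Function.Injective lam)
    (hpos : ∀ k, 0 ≤ lam k) (htop : Tendsto lam atTop atTop) (hdiv : ¬Summable fun k => 1 / lam k)
    {m : ℝ} (hm : 0 < m) : rpowIcc m hm.le ∈ closure (powSpan lam : Set C(Icc (0 : ℝ) 1, ℝ)) := by
  refine Metric.mem_closure_iff.2 fun ε hε => ?_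
  obtain ⟨s, hsm, hsε⟩ := exists_finset_prod_one_sub_div_lt htop hdiv hm hε
  obtain ⟨a, ha⟩ := exists_abs_rpow_sub_sum_le_prod hm (s.image lam) (by simpa using hsm)
  refine ⟨∑ k ∈ s, a (lam k) • rpowIcc (lam k) (hpos k),
    Submodule.sum_mem _ fun k _ => Submodule.smul_mem _ _ (rpowIcc_mem_powSpan lam k _), ?_⟩
  rw [Finset.prod_image hinj.injOn] at ha
  refine lt_of_le_of_lt ((ContinuousMap.dist_le (Finset.prod_nonneg fun k hk =>
    sub_nonneg.2 ((div_le_one (hm.trans (hsm k hk))).2 (hsm k hk).le))).2 fun x => ?_) hsε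
  have := ha x x.2
  rw [Finset.sum_image hinj.injOn] at this
  simpa [Real.dist_eq, rpowIcc] using this

theorem dense_of_pow_mem_closure {a b : ℝ} (V : Submodule ℝ C(Icc a b, ℝ))
    (h : ∀ n : ℕ, (X ^ n : ℝ[X]).toContinuousMapOn (Icc a b) ∈ closure (V : Set C(Icc a b, ℝ))) :
    Dense (V : Set C(Icc a b, ℝ)) := by
  have hpoly : ∀ p : ℝ[X], toContinuousMapOnAlgHom (Icc a b) p ∈ V.topologicalClosure := by
    intro p
    induction p using Polynomial.induction_on' with
    | add p q hp hq => exact map_add (toContinuousMapOnAlgHom (Icc a b)) p q ▸ add_mem hp hq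
    | monomial n c =>
      rw [← smul_X_eq_monomial, map_smul]
      exact Submodule.smul_mem _ _ (h n)
  rw [Submodule.dense_iff_topologicalClosure_eq_top, eq_top_iff]
  intro F _
  have hF : F ∈ closure (polynomialFunctions (Icc a b) : Set C(Icc a b, ℝ)) := by
    rw [← Subalgebra.topologicalClosure_coe, polynomialFunctions_closure_eq_top]
    trivial
  rw [polynomialFunctions_coe] at hF
  exact closure_minimal (range_subset_iff.2 hpoly) V.isClosed_topologicalClosure hF

theorem dense_powSpan_of_not_summable {lam : ℕ → ℝ} (hinj : Function.Injective lam)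
    (hpos : ∀ k, 0 ≤ lam k) (htop : Tendsto lam atTop atTop) (h0 : lam 0 = 0)
    (hdiv : ¬Summable fun k => 1 / lam k) : Dense (powSpan lam : Set C(Icc (0 : ℝ) 1, ℝ)) := by
  refine dense_of_pow_mem_closure _ fun n => ?_
  rcases n.eq_zero_or_pos with rfl | hn
  · refine subset_closure (Submodule.subset_span ⟨0, fun x => ?_⟩)
    simp [h0]
  · convert rpowIcc_mem_closure_powSpan hinj hpos htop hdiv (Nat.cast_pos.2 hn)
    ext x
    simp [rpowIcc]

theorem prod_sq_div_le_sq_dist {lam : ℕ → ℝ} (hinj : Function.Injective lam)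
    (hpos : ∀ k, 0 ≤ lam k) {m : ℝ} (hm : 0 ≤ m) (hme : ∀ k, lam k ≠ m)
    {P : C(Icc (0 : ℝ) 1, ℝ)} (hP : P ∈ powSpan lam) :
    ∃ s : Finset ℕ, (∏ k ∈ s, ((m - lam k) / (m + lam k + 1)) ^ 2) / (2 * m + 1) ≤
      dist (rpowIcc m hm) P ^ 2 := by
  obtain ⟨s, c, hPc⟩ := exists_sum_of_mem_powSpan hpos hP
  refine ⟨s, (prod_sq_div_le_integral_sq s lam (fun k _ => hpos k) hinj.injOn hm
    (fun k _ => hme k) c).trans ?_⟩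
  have hbound : ∀ x ∈ Icc (0 : ℝ) 1,
      (x ^ m - ∑ k ∈ s, c k * x ^ lam k) ^ 2 ≤ dist (rpowIcc m hm) P ^ 2 := fun x hx => by
    have := ContinuousMap.dist_apply_le_dist (f := rpowIcc m hm) (g := P) ⟨x, hx⟩
    rw [Real.dist_eq, hPc] at this
    exact sq_le_sq' (abs_le.1 this).1 (abs_le.1 this).2
  have hcont : Continuous fun x : ℝ => (x ^ m - ∑ k ∈ s, c k * x ^ lam k) ^ 2 :=
    ((Real.continuous_rpow_const hm).sub (continuous_finsetSum _ fun k _ =>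
      continuous_const.mul (Real.continuous_rpow_const (hpos k)))).pow 2
  calc ∫ x in (0 : ℝ)..1, (x ^ m - ∑ k ∈ s, c k * x ^ lam k) ^ 2
      ≤ ∫ _ in (0 : ℝ)..1, dist (rpowIcc m hm) P ^ 2 :=
        intervalIntegral.integral_mono_on zero_le_one (hcont.intervalIntegrable 0 1)
          intervalIntegrable_const hbound
    _ = dist (rpowIcc m hm) P ^ 2 := by simp

theorem rpowIcc_notMem_closure_powSpan {lam : ℕ → ℝ} (hinj : Function.Injective lam)
    (hpos : ∀ k, 0 ≤ lam k) (htop : Tendsto lam atTop atTop) (hsum : Summable fun k => 1 / lam k)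
    {m : ℝ} (hm : 0 ≤ m) (hme : ∀ k, lam k ≠ m) :
    rpowIcc m hm ∉ closure (powSpan lam : Set C(Icc (0 : ℝ) 1, ℝ)) := by
  set q : ℕ → ℝ := fun k => ((m - lam k) / (m + lam k + 1)) ^ 2
  have hden : ∀ k, 0 < m + lam k + 1 := fun k => by linarith [hpos k]
  have hq0 : ∀ k, 0 < q k := fun k => by
    have := div_ne_zero (sub_ne_zero.2 (hme k).symm) (hden k).ne'
    positivity
  have hq1 : ∀ k, q k ≤ 1 := fun k => by
    show ((m - lam k) / (m + lam k + 1)) ^ 2 ≤ 1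
    rw [div_pow, div_le_one (pow_pos (hden k) 2)]
    nlinarith [hpos k]
  have hδ := exp_neg_tsum_le_prod hq0 hq1 (summable_inv_sq_sub_one htop hsum hm)
  set δ := Real.exp (-∑' k, ((q k)⁻¹ - 1))
  intro hmem
  obtain ⟨P, hP, hPd⟩ := Metric.mem_closure_iff.1 hmem _
    (Real.sqrt_pos.2 (by positivity : 0 < δ / (2 * m + 1)))
  obtain ⟨s, hs⟩ := prod_sq_div_le_sq_dist hinj hpos hm hme hP
  refine hPd.not_ge ?_
  calc Real.sqrt (δ / (2 * m + 1))
      ≤ Real.sqrt (dist (rpowIcc m hm) P ^ 2) :=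
        Real.sqrt_le_sqrt ((div_le_div_of_nonneg_right (hδ s) (by positivity)).trans hs)
    _ = dist (rpowIcc m hm) P := Real.sqrt_sq dist_nonneg

end Muntz

open Muntz

/-- Müntz's theorem: for 0 ≤ λ₀ < λ₁ < ⋯ → ∞, the span of the powers x ^ λₖ is dense
in C[0,1] iff λ₀ = 0 and Σ_{k≥1} 1/λₖ = ∞. -/
theorem muntz (lam : ℕ → ℝ) (h0 : 0 ≤ lam 0) (hmono : StrictMono lam)
    (htop : Filter.Tendsto lam Filter.atTop Filter.atTop) :
    Dense (Submodule.span ℝ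
        {F : C(Set.Icc (0:ℝ) 1, ℝ) |
          ∃ k : ℕ, ∀ x : Set.Icc (0:ℝ) 1, F x = (x : ℝ) ^ lam k} :
        Set C(Set.Icc (0:ℝ) 1, ℝ)) ↔
      (lam 0 = 0 ∧
        Filter.Tendsto (fun n : ℕ => ∑ k ∈ Finset.Icc 1 n, 1 / lam k)
          Filter.atTop Filter.atTop) := by
  have hpos : ∀ k, 0 ≤ lam k := fun k => h0.trans (hmono.monotone k.zero_le)
  change Dense (powSpan lam : Set C(Icc (0 : ℝ) 1, ℝ)) ↔ _
  rw [tendsto_sum_Icc_one_atTop_iff fun k => one_div_nonneg.2 (hpos k)]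
  refine ⟨fun hd => ?_, fun ⟨hz, hdiv⟩ =>
    dense_powSpan_of_not_summable hmono.injective hpos htop hz hdiv⟩
  have hz : lam 0 = 0 := by
    by_contra hne
    exact not_dense_powSpan_of_pos (fun k => (h0.lt_of_ne (Ne.symm hne)).trans_le
      (hmono.monotone k.zero_le)) hd
  refine ⟨hz, fun hsum => ?_⟩
  have h1 : 0 < lam 1 := hz ▸ hmono zero_lt_one
  have hme : ∀ k, lam k ≠ lam 1 / 2 := fun k => by
    rcases k.eq_zero_or_pos with rfl | hk
    · rw [hz]; linarith
    · linarith [hmono.monotone hk]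
  exact rpowIcc_notMem_closure_powSpan hmono.injective hpos htop hsum (by linarith) hme (hd _)
end

section
/- Let Γ be a subset of ℝ \ [−1,1]. If Γ either has a finite accumulation point lying in ℝ \ [−1,1], or is unbounded (has ∞ as an accumulation point), then the linear span of the functions t ↦ 1/(t − γ), γ ∈ Γ, is dense in C[−1,1] with the uniform norm. -/
/-!
Let `M` be the closure of the span: a closed subspace containing the kernels `(t - γ)⁻¹`, `γ ∈ Γ`.

If `Γ` accumulates at `x ∉ [-1, 1]`, put `u = (t - x)⁻¹`. Letting `γ → x` in `(t - γ)⁻¹ u^k`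
gives `u^(k+1) ∈ M`, and the resolvent identity then gives `(t - γ)⁻¹ u^(k+1) ∈ M` for `γ ≠ x`.
So `u, u², … ∈ M`, and these span a dense subspace by Stone–Weierstrass: `u` is injective and
has no zeros, so `u` times the polynomials in `u` is dense.

If `Γ` is unbounded, `-γ (t - γ)⁻¹ t^k → t^k` as `|γ| → ∞`, and the same induction puts every
monomial `t^k` in `M`.
-/

open Set Filter Topology Bornology

section StoneWeierstrass

variable {X : Type*} [TopologicalSpace X] [CompactSpace X]

theorem dense_span_range_pow {u : C(X, ℝ)} (hu : Function.Injective u) :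
    Dense (Submodule.span ℝ (range (u ^ ·)) : Set C(X, ℝ)) := by
  have hsep : (Algebra.adjoin ℝ {u}).SeparatesPoints := fun s t hst =>
    ⟨u, ⟨u, Algebra.subset_adjoin rfl, rfl⟩, hu.ne hst⟩
  have hspan : (Algebra.adjoin ℝ {u} : Set C(X, ℝ)) = Submodule.span ℝ (range (u ^ ·)) := by
    rw [← Subalgebra.coe_toSubmodule, Algebra.adjoin_eq_span, ← Submonoid.powers_eq_closure,
      Submonoid.coe_powers]
  rw [← hspan, dense_iff_closure_eq, ← Subalgebra.topologicalClosure_coe,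
    ContinuousMap.subalgebra_topologicalClosure_eq_top_of_separatesPoints _ hsep]
  rfl

theorem dense_span_range_pow_succ {u : C(X, ℝ)} (hu : Function.Injective u)
    (hu₀ : ∀ x, u x ≠ 0) :
    Dense (Submodule.span ℝ (range fun k : ℕ => u ^ (k + 1)) : Set C(X, ℝ)) := by
  obtain ⟨v, rfl⟩ := (ContinuousMap.isUnit_iff_forall_ne_zero u).2 hu₀
  have hsurj : Function.Surjective (LinearMap.mulLeft ℝ (v : C(X, ℝ))) :=
    fun f => ⟨v⁻¹ * f, by simp⟩
  have hdense := hsurj.denseRange.dense_image (continuous_const.mul continuous_id)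
    (dense_span_range_pow hu)
  rw [← Submodule.map_coe, Submodule.map_span, ← range_comp] at hdense
  simpa only [Function.comp_def, LinearMap.mulLeft_apply, ← pow_succ'] using hdense

end StoneWeierstrass

theorem sub_ne_zero_of_mem_compl {K : Set ℝ} (γ : (Kᶜ : Set ℝ)) (t : K) : (t : ℝ) - γ ≠ 0 :=
  sub_ne_zero.2 fun h => γ.2 (h ▸ t.2)

/-- Curried so that the kernel is continuous in the pole `γ` for the compact-open topology, which
on `C(K, ℝ)` with `K` compact is the topology of uniform convergence. -/
noncomputable def cauchyKernel (K : Set ℝ) : C((Kᶜ : Set ℝ), C(K, ℝ)) :=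
  ContinuousMap.curry ⟨fun p => ((p.2 : ℝ) - p.1)⁻¹,
    (by fun_prop : Continuous fun p : (Kᶜ : Set ℝ) × K => (p.2 : ℝ) - p.1).inv₀
      fun p => sub_ne_zero_of_mem_compl p.1 p.2⟩

section CauchyKernel

variable {K : Set ℝ}

@[simp]
theorem cauchyKernel_apply (γ : (Kᶜ : Set ℝ)) (t : K) :
    cauchyKernel K γ t = ((t : ℝ) - γ)⁻¹ := rfl

theorem cauchyKernel_sub_cauchyKernel (γ x : (Kᶜ : Set ℝ)) :
    cauchyKernel K γ - cauchyKernel K x =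
      ((γ : ℝ) - x) • (cauchyKernel K γ * cauchyKernel K x) := by
  ext t
  have := sub_ne_zero_of_mem_compl γ t
  have := sub_ne_zero_of_mem_compl x t
  simp
  field_simp
  ring

theorem restrict_id_mul_cauchyKernel (γ : (Kᶜ : Set ℝ)) :
    (ContinuousMap.id ℝ).restrict K * cauchyKernel K γ = 1 + (γ : ℝ) • cauchyKernel K γ := by
  ext t
  have := sub_ne_zero_of_mem_compl γ t
  simp
  field_simp
  ring

theorem cauchyKernel_injective (x : (Kᶜ : Set ℝ)) : Function.Injective (cauchyKernel K x) :=
  fun s t h => by simpa [Subtype.ext_iff] using h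

theorem norm_cauchyKernel_le [CompactSpace K] {R : ℝ} (hR : ∀ t : K, |(t : ℝ)| ≤ R)
    {γ : (Kᶜ : Set ℝ)} (hγ : R < |(γ : ℝ)|) : ‖cauchyKernel K γ‖ ≤ (|(γ : ℝ)| - R)⁻¹ := by
  refine (ContinuousMap.norm_le _ (by simp; linarith)).2 fun t => ?_
  have hdist : |(γ : ℝ)| - R ≤ |(t : ℝ) - γ| := by
    have := abs_sub_abs_le_abs_sub (γ : ℝ) t
    rw [abs_sub_comm] at this
    linarith [hR t]
  rw [cauchyKernel_apply, Real.norm_eq_abs, abs_inv]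
  exact inv_anti₀ (by linarith) hdist

theorem tendsto_cauchyKernel_cobounded [CompactSpace K] :
    Tendsto (cauchyKernel K) (comap (↑) (cobounded ℝ)) (𝓝 0) := by
  obtain ⟨R, hR⟩ := (isCompact_iff_compactSpace.2 ‹_›).isBounded.exists_norm_le
  have habs : Tendsto (fun γ : (Kᶜ : Set ℝ) => |(γ : ℝ)|) (comap (↑) (cobounded ℝ)) atTop :=
    tendsto_norm_cobounded_atTop.comp tendsto_comap
  refine squeeze_zero_norm' ?_
    (tendsto_inv_atTop_zero.comp (tendsto_atTop_add_const_right _ (-R) habs))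
  filter_upwards [habs.eventually_gt_atTop R] with γ hγ
  exact norm_cauchyKernel_le (fun t => hR t t.2) hγ

variable {M : Submodule ℝ C(K, ℝ)} {Γ : Set (Kᶜ : Set ℝ)}

theorem pow_cauchyKernel_mem_of_accPt [LocallyCompactSpace K] (hM : IsClosed (M : Set C(K, ℝ)))
    (hΓ : ∀ γ ∈ Γ, cauchyKernel K γ ∈ M) {x : (Kᶜ : Set ℝ)} (hx : AccPt x (𝓟 Γ)) (k : ℕ) :
    cauchyKernel K x ^ (k + 1) ∈ M := by
  have hx' : x ∈ closure (Γ \ {x}) :=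
    mem_closure_iff_nhdsWithin_neBot.2 (accPt_principal_iff_nhdsWithin.1 hx)
  have limit (k : ℕ) (hk : ∀ γ ∈ Γ \ {x}, cauchyKernel K γ * cauchyKernel K x ^ k ∈ M) :
      cauchyKernel K x ^ (k + 1) ∈ M := by
    rw [pow_succ', ← SetLike.mem_coe, ← hM.closure_eq]
    exact map_mem_closure (f := fun γ => cauchyKernel K γ * cauchyKernel K x ^ k)
      ((cauchyKernel K).continuous.mul continuous_const) hx' hk
  suffices ∀ k, ∀ γ ∈ Γ \ {x}, cauchyKernel K γ * cauchyKernel K x ^ k ∈ M from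
    limit k (this k)
  intro k
  induction k with
  | zero => exact fun γ hγ => by simpa using hΓ γ hγ.1
  | succ k ih =>
    intro γ hγ
    have hγx : (γ : ℝ) - x ≠ 0 := sub_ne_zero.2 (Subtype.coe_injective.ne hγ.2)
    have hrec : cauchyKernel K γ * cauchyKernel K x ^ (k + 1) = ((γ : ℝ) - x)⁻¹ •
        (cauchyKernel K γ * cauchyKernel K x ^ k - cauchyKernel K x ^ (k + 1)) := by
      rw [pow_succ', ← mul_assoc, ← sub_mul, cauchyKernel_sub_cauchyKernel, smul_mul_assoc,
        smul_smul, inv_mul_cancel₀ hγx, one_smul]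
    rw [hrec]
    exact M.smul_mem _ (M.sub_mem (ih γ hγ) (limit k ih))

theorem pow_restrict_id_mem_of_not_isBounded [CompactSpace K]
    (hM : IsClosed (M : Set C(K, ℝ))) (hΓ : ∀ γ ∈ Γ, cauchyKernel K γ ∈ M)
    (hunb : ¬ IsBounded ((↑) '' Γ : Set ℝ)) (k : ℕ) :
    (ContinuousMap.id ℝ).restrict K ^ k ∈ M := by
  set c := (ContinuousMap.id ℝ).restrict K
  have hl : (comap (↑) (cobounded ℝ) ⊓ 𝓟 Γ).NeBot := by
    refine inf_principal_neBot_iff.2 fun U hU => ?_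
    obtain ⟨V, hV, hVU⟩ := mem_comap.1 hU
    obtain ⟨_, ⟨γ, hγ, rfl⟩, hγV⟩ :=
      not_subset.1 fun h => hunb ((isBounded_compl_iff.2 hV).subset h)
    exact ⟨γ, hVU (not_not.1 hγV), hγ⟩
  have limit (k : ℕ) (hk : ∀ γ ∈ Γ, cauchyKernel K γ * c ^ k ∈ M) : c ^ k ∈ M := by
    have hlim : Tendsto (fun γ => c ^ k - c ^ (k + 1) * cauchyKernel K γ)
        (comap (↑) (cobounded ℝ) ⊓ 𝓟 Γ) (𝓝 (c ^ k)) := by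
      simpa using (tendsto_const_nhds.sub
        (tendsto_const_nhds.mul tendsto_cauchyKernel_cobounded)).mono_left inf_le_left
    refine hM.mem_of_tendsto hlim (eventually_inf_principal.2 (.of_forall fun γ hγ => ?_))
    have hrec : c ^ k - c ^ (k + 1) * cauchyKernel K γ =
        (-(γ : ℝ)) • (cauchyKernel K γ * c ^ k) := by
      rw [pow_succ, mul_assoc, restrict_id_mul_cauchyKernel]
      simp [mul_add, mul_comm]
    rw [SetLike.mem_coe, hrec]
    exact M.smul_mem _ (hk γ hγ)
  suffices ∀ k, ∀ γ ∈ Γ, cauchyKernel K γ * c ^ k ∈ M from limit k (this k)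
  intro k
  induction k with
  | zero => simpa using hΓ
  | succ k ih =>
    intro γ hγ
    have hrec : cauchyKernel K γ * c ^ (k + 1) =
        c ^ k + (γ : ℝ) • (cauchyKernel K γ * c ^ k) := by
      rw [pow_succ, mul_comm, mul_assoc, restrict_id_mul_cauchyKernel]
      simp [mul_add, mul_comm]
    rw [hrec]
    exact M.add_mem (limit k ih) (M.smul_mem _ (ih γ hγ))

theorem cauchyKernel_mem_topologicalClosure_span {γ : (Kᶜ : Set ℝ)} (hγ : γ ∈ Γ) :
    cauchyKernel K γ ∈ (Submodule.span ℝ (cauchyKernel K '' Γ)).topologicalClosure :=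
  Submodule.le_topologicalClosure _ (Submodule.subset_span (mem_image_of_mem _ hγ))

theorem dense_span_cauchyKernel_of_accPt [CompactSpace K] {x : (Kᶜ : Set ℝ)}
    (hx : AccPt x (𝓟 Γ)) :
    Dense (Submodule.span ℝ (cauchyKernel K '' Γ) : Set C(K, ℝ)) := by
  have hu₀ (t : K) : cauchyKernel K x t ≠ 0 := inv_ne_zero (sub_ne_zero_of_mem_compl x t)
  refine dense_closure.1 ((dense_span_range_pow_succ (cauchyKernel_injective x) hu₀).mono ?_)
  rw [← Submodule.topologicalClosure_coe]
  exact Submodule.span_le.2 <| range_subset_iff.2 <| pow_cauchyKernel_mem_of_accPt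
    (Submodule.isClosed_topologicalClosure _) (fun _ => cauchyKernel_mem_topologicalClosure_span) hx

theorem dense_span_cauchyKernel_of_not_isBounded [CompactSpace K]
    (hΓ : ¬ IsBounded ((↑) '' Γ : Set ℝ)) :
    Dense (Submodule.span ℝ (cauchyKernel K '' Γ) : Set C(K, ℝ)) := by
  refine dense_closure.1 ((dense_span_range_pow (u := (ContinuousMap.id ℝ).restrict K)
    Subtype.val_injective).mono ?_)
  rw [← Submodule.topologicalClosure_coe]
  exact Submodule.span_le.2 <| range_subset_iff.2 <| pow_restrict_id_mem_of_not_isBounded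
    (Submodule.isClosed_topologicalClosure _) (fun _ => cauchyKernel_mem_topologicalClosure_span) hΓ

end CauchyKernel

/-- If Γ ⊆ ℝ \ [-1,1] has a finite accumulation point in ℝ \ [-1,1], or is unbounded,
then the span of t ↦ 1/(t - γ), γ ∈ Γ, is dense in C[-1,1]. -/
theorem rational_functions_dense (Γ : Set ℝ) (hΓ : ∀ γ ∈ Γ, γ ∉ Set.Icc (-1:ℝ) 1)
    (hacc : (∃ x : ℝ, x ∉ Set.Icc (-1:ℝ) 1 ∧ AccPt x (Filter.principal Γ)) ∨
      ¬ Bornology.IsBounded Γ) :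
    Dense (Submodule.span ℝ
        {F : C(Set.Icc (-1:ℝ) 1, ℝ) |
          ∃ γ ∈ Γ, ∀ t : Set.Icc (-1:ℝ) 1, F t = 1 / ((t : ℝ) - γ)} :
        Set C(Set.Icc (-1:ℝ) 1, ℝ)) := by
  set Γ' : Set ((Set.Icc (-1:ℝ) 1)ᶜ : Set ℝ) := (↑) ⁻¹' Γ
  have hsub : cauchyKernel _ '' Γ' ⊆
      {F : C(Set.Icc (-1:ℝ) 1, ℝ) | ∃ γ ∈ Γ, ∀ t : Set.Icc (-1:ℝ) 1, F t = 1 / ((t : ℝ) - γ)} := by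
    rintro _ ⟨γ, hγ, rfl⟩
    exact ⟨γ, hγ, fun t => (one_div _).symm⟩
  refine Dense.mono (SetLike.coe_subset_coe.2 (Submodule.span_mono hsub)) ?_
  rcases hacc with ⟨x, hx, hxacc⟩ | hunb
  · refine dense_span_cauchyKernel_of_accPt (x := ⟨x, hx⟩) ?_
    rwa [← comap_principal, isClosed_Icc.isOpen_compl.isOpenEmbedding_subtypeVal.accPt_comap_iff]
  · refine dense_span_cauchyKernel_of_not_isBounded ?_
    rwa [image_preimage_eq_of_subset fun γ hγ => ⟨⟨γ, hΓ γ hγ⟩, rfl⟩]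
end

section
/- Let σ ∈ C(ℝ), σ ≠ 0. Then the linear span of the functions x ↦ σ(αx + β), over all α, β ∈ ℝ, is dense in C(ℝ) in the topology of uniform convergence on compact subsets if and only if σ is not a polynomial. -/
/-!
If `σ` is smooth, differentiating `α ↦ σ (α * x + β)` `k` times at `α = 0` shows that the closed
span `V` of the functions `x ↦ σ (α * x + β)` on a compact set `K` contains `x ↦ σ⁽ᵏ⁾(β) xᵏ`.
A general continuous `σ` is replaced by its mollifications `φ ⋆ σ`, whose translates and dilates
are averages of those of `σ` and hence stay in `V`. If some `xᵏ` were missing from `V`, all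
mollifications would be polynomials of degree `< k`, and so would be their pointwise limit `σ`.
Otherwise `V` contains all polynomials and is everything by Weierstrass; density in `C(ℝ, ℝ)` is
checked one compact set at a time. Conversely, translates and dilates of a polynomial of degree
`n` lie in the closed finite-dimensional space of polynomials of degree `≤ n`.
-/

open MeasureTheory Filter Topology Set Polynomial
open scoped ContDiff Convolution

theorem Submodule.integral_mem_of_isClosed {E : Type*} [NormedAddCommGroup E] [NormedSpace ℝ E]
    [CompleteSpace E] {X : Type*} [MeasurableSpace X] {μ : Measure X} {p : Submodule ℝ E}
    (hp : IsClosed (p : Set E)) {f : X → E} (hf : ∀ x, f x ∈ p) : ∫ x, f x ∂μ ∈ p := by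
  have := hp.completeSpace_coe
  have h := p.subtypeₗᵢ.integral_comp_comm (μ := μ) fun x => (⟨f x, hf x⟩ : p)
  exact h ▸ Submodule.coe_mem _

theorem sub_eq_mul_integral_deriv {g g' : ℝ → ℝ} (hg : ∀ y, HasDerivAt g (g' y) y)
    (hg' : Continuous g') (u v : ℝ) :
    g (u + v) - g u = v * ∫ t in (0 : ℝ)..1, g' (u + t * v) := by
  rw [← intervalIntegral.integral_const_mul]
  have hderiv : ∀ t, HasDerivAt (fun t => g (u + t * v)) (v * g' (u + t * v)) t := fun t =>
    ((hg (u + t * v)).comp t (((hasDerivAt_id t).mul_const v).const_add u)).congr_deriv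
      (by simp [mul_comm])
  simpa using (intervalIntegral.integral_eq_sub_of_hasDerivAt (fun t _ => hderiv t)
    ((by fun_prop : Continuous fun t => v * g' (u + t * v)).intervalIntegrable 0 1)).symm

theorem ContinuousMap.dense_of_dense_restrict {X E : Type*} [TopologicalSpace X]
    [PseudoMetricSpace E] {s : Set C(X, E)}
    (h : ∀ K, IsCompact K → Dense ((fun g : C(X, E) => g.restrict K) '' s)) : Dense s := by
  intro f
  rw [mem_closure_iff_nhds_basis
    (nhds_basis_uniformity' Metric.uniformity_basis_dist.compactConvergenceUniformity)]
  rintro ⟨K, ε⟩ ⟨hK, hε⟩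
  have := isCompact_iff_compactSpace.mp hK
  obtain ⟨_, ⟨g, hg, rfl⟩, hfg⟩ := Metric.mem_closure_iff.mp (h K hK (f.restrict K)) ε hε
  exact ⟨g, hg, fun x hx => (ContinuousMap.dist_apply_le_dist ⟨x, hx⟩).trans_lt hfg⟩

noncomputable def polyFunDegreeLT (k : ℕ) : Submodule ℝ (ℝ → ℝ) :=
  (degreeLT ℝ k).map (LinearMap.pi fun x => leval x)

theorem mem_polyFunDegreeLT {k : ℕ} {f : ℝ → ℝ} :
    f ∈ polyFunDegreeLT k ↔ ∃ p : ℝ[X], p.degree < k ∧ ∀ x, p.eval x = f x := by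
  simp [polyFunDegreeLT, mem_degreeLT, funext_iff]

theorem polyFunDegreeLT_mono : Monotone polyFunDegreeLT := fun _ _ h =>
  Submodule.map_mono (degreeLT_mono h)

theorem isClosed_polyFunDegreeLT (k : ℕ) : IsClosed (polyFunDegreeLT k : Set (ℝ → ℝ)) :=
  have : FiniteDimensional ℝ (degreeLT ℝ k) := (degreeLTEquiv ℝ k).symm.finiteDimensional
  have : FiniteDimensional ℝ (polyFunDegreeLT k) := Module.Finite.map _ _
  Submodule.closed_of_finiteDimensional _

theorem pow_mem_polyFunDegreeLT_succ (k : ℕ) :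
    (fun x : ℝ => x ^ k) ∈ polyFunDegreeLT (k + 1) :=
  mem_polyFunDegreeLT.mpr ⟨X ^ k, by simp; norm_cast; omega, by simp⟩

theorem pow_notMem_polyFunDegreeLT (k : ℕ) : (fun x : ℝ => x ^ k) ∉ polyFunDegreeLT k := by
  rintro ⟨p, hp, hpX⟩
  have : p = X ^ k := Polynomial.funext fun x => by simpa using congrFun hpX x
  simp [this, mem_degreeLT] at hp

theorem eval_comp_affine_mem_polyFunDegreeLT (p : ℝ[X]) (α β : ℝ) :
    (fun x => p.eval (α * x + β)) ∈ polyFunDegreeLT (p.natDegree + 1) := by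
  refine mem_polyFunDegreeLT.mpr ⟨p.comp (C α * X + C β), ?_, by simp⟩
  refine degree_le_natDegree.trans_lt (WithBot.coe_lt_coe.mpr ?_)
  calc (p.comp (C α * X + C β)).natDegree ≤ p.natDegree * 1 :=
        natDegree_comp_le.trans (Nat.mul_le_mul_left _ natDegree_linear_le)
    _ < p.natDegree + 1 := by omega

theorem mem_polyFunDegreeLT_of_iteratedDeriv_eq_zero {k : ℕ} {f : ℝ → ℝ}
    (hf : ContDiff ℝ k f) (h : iteratedDeriv k f = 0) : f ∈ polyFunDegreeLT k := by
  induction k generalizing f with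
  | zero => simp_all
  | succ k ih =>
    -- The `k`-th derivative is a constant `c • k!`; subtracting `c xᵏ` lowers the order.
    have hconst : ∀ x, iteratedDeriv k f x = iteratedDeriv k f 0 := fun x =>
      is_const_of_deriv_eq_zero (hf.differentiable_iteratedDeriv k (by norm_cast; omega))
        (by simpa [iteratedDeriv_succ] using congrFun h) x 0
    set c := iteratedDeriv k f 0 / k.factorial
    have hpow : ContDiff ℝ k (c • fun x : ℝ => x ^ k) := by fun_prop
    have hrest : f - c • (fun x => x ^ k) ∈ polyFunDegreeLT k := by
      refine ih (hf.of_succ.sub hpow) (funext fun x => ?_)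
      rw [iteratedDeriv_sub hf.of_succ.contDiffAt hpow.contDiffAt,
        iteratedDeriv_const_smul_field, iteratedDeriv_pow, hconst x]
      simp [c, Nat.descFactorial_self, k.factorial_ne_zero]
    simpa using add_mem (polyFunDegreeLT_mono k.le_succ hrest)
      (Submodule.smul_mem _ c (pow_mem_polyFunDegreeLT_succ k))

section PowMulAffineComp

variable (K : Set ℝ)

/-- The factor `xᵏ` is what `k` derivatives in `α` of `g (α * x + β)` produce. -/
noncomputable def powMulAffineComp (g : C(ℝ, ℝ)) (k : ℕ) (α β : ℝ) : C(K, ℝ) :=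
  ⟨fun x => (x : ℝ) ^ k * g (α * x + β), by fun_prop⟩

variable {K}

theorem powMulAffineComp_apply (g : C(ℝ, ℝ)) (k : ℕ) (α β : ℝ) (x : K) :
    powMulAffineComp K g k α β x = (x : ℝ) ^ k * g (α * x + β) := rfl

theorem powMulAffineComp_succ_mem_of_hasDerivAt {V : Submodule ℝ C(K, ℝ)}
    (hV : IsClosed (V : Set C(K, ℝ))) {g g' : C(ℝ, ℝ)} (hg : ∀ y, HasDerivAt g (g' y) y)
    {k : ℕ} (hk : ∀ α β, powMulAffineComp K g k α β ∈ V) (α β : ℝ) :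
    powMulAffineComp K g' (k + 1) α β ∈ V := by
  set D : ℝ → ℝ → ℝ := fun u v => ∫ t in (0 : ℝ)..1, g' (u + t * v)
  have hD : Continuous (Function.uncurry D) :=
    intervalIntegral.continuous_parametric_intervalIntegral_of_continuous' (by fun_prop) 0 1
  -- `Q h` is the difference quotient in `α`, continued to `h = 0` through the mean slope `D`.
  let Q : C(ℝ × K, ℝ) := ⟨fun p => (p.2 : ℝ) ^ (k + 1) * D (α * p.2 + β) (p.1 * p.2), by
    have := hD.comp (f := fun p : ℝ × K => (α * p.2 + β, p.1 * (p.2 : ℝ))) (by fun_prop)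
    exact (by fun_prop : Continuous fun p : ℝ × K => (p.2 : ℝ) ^ (k + 1)).mul this⟩
  have hQ0 : Q.curry 0 = powMulAffineComp K g' (k + 1) α β := by
    ext x; simp [Q, D, powMulAffineComp_apply]
  have hQ : ∀ h ≠ 0, Q.curry h =
      h⁻¹ • (powMulAffineComp K g k (α + h) β - powMulAffineComp K g k α β) := by
    intro h hh
    ext x
    show (x : ℝ) ^ (k + 1) * D (α * x + β) (h * x) =
      h⁻¹ * ((x : ℝ) ^ k * g ((α + h) * x + β) - (x : ℝ) ^ k * g (α * x + β))
    rw [show (α + h) * x + β = α * x + β + h * x by ring, ← mul_sub,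
      sub_eq_mul_integral_deriv hg g'.continuous]
    change _ = h⁻¹ * ((x : ℝ) ^ k * (h * x * D (α * x + β) (h * x)))
    field_simp
    ring
  rw [← hQ0]
  refine hV.mem_of_tendsto
    ((Q.curry.continuous.tendsto 0).mono_left (nhdsWithin_le_nhds (s := {0}ᶜ)))
    (eventually_nhdsWithin_of_forall fun h hh => ?_)
  rw [hQ h hh]
  exact V.smul_mem _ (V.sub_mem (hk _ _) (hk _ _))

theorem iteratedDeriv_smul_X_pow_mem {V : Submodule ℝ C(K, ℝ)}
    (hV : IsClosed (V : Set C(K, ℝ))) {g : C(ℝ, ℝ)} (hg : ContDiff ℝ ∞ g)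
    (hgV : ∀ α β, powMulAffineComp K g 0 α β ∈ V) (k : ℕ) (β : ℝ) :
    iteratedDeriv k g β • toContinuousMapOnAlgHom K (X ^ k) ∈ V := by
  let G (k : ℕ) : C(ℝ, ℝ) :=
    ⟨iteratedDeriv k g, hg.continuous_iteratedDeriv k (by exact_mod_cast le_top)⟩
  have hG : ∀ k α β, powMulAffineComp K (G k) k α β ∈ V := by
    intro k
    induction k with
    | zero =>
      have : G 0 = g := by ext; simp [G]
      rwa [this]
    | succ k ih =>
      refine powMulAffineComp_succ_mem_of_hasDerivAt hV (fun y => ?_) ih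
      show HasDerivAt (iteratedDeriv k g) (iteratedDeriv (k + 1) g y) y
      rw [iteratedDeriv_succ]
      exact (hg.differentiable_iteratedDeriv k
        (by exact_mod_cast ENat.natCast_lt_top k) y).hasDerivAt
  convert hG k 0 β using 1
  ext x
  simp [powMulAffineComp_apply, G, mul_comm]

theorem powMulAffineComp_mem_of_eq_integral [CompactSpace K] {V : Submodule ℝ C(K, ℝ)}
    (hV : IsClosed (V : Set C(K, ℝ))) {σ : C(ℝ, ℝ)}
    (hσ : ∀ α β, powMulAffineComp K σ 0 α β ∈ V) {φ : ℝ → ℝ} (hφ : Continuous φ)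
    (hφs : HasCompactSupport φ) {g : C(ℝ, ℝ)} (hg : ∀ x, g x = ∫ s, φ s * σ (x - s))
    (α β : ℝ) : powMulAffineComp K g 0 α β ∈ V := by
  let Φ : C(ℝ × K, ℝ) := ⟨fun p => φ p.1 * σ (α * p.2 + β - p.1), by fun_prop⟩
  have hΦ : ⇑Φ.curry = fun s => φ s • powMulAffineComp K σ 0 α (β - s) := by
    ext s x
    simp [Φ, powMulAffineComp_apply, add_sub_assoc]
  have hint : Integrable Φ.curry :=
    Φ.curry.continuous.integrable_of_hasCompactSupport (hΦ ▸ hφs.smul_right)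
  have heq : powMulAffineComp K g 0 α β = ∫ s, Φ.curry s := by
    ext x
    have := (ContinuousMap.evalCLM ℝ x).integral_comp_comm hint
    simp only [ContinuousMap.evalCLM_apply] at this
    simp [← this, powMulAffineComp_apply, hg, Φ]
  rw [heq, hΦ]
  exact Submodule.integral_mem_of_isClosed hV fun s => V.smul_mem _ (hσ _ _)

theorem exists_contDiff_tendsto_of_powMulAffineComp_mem [CompactSpace K]
    {V : Submodule ℝ C(K, ℝ)} (hV : IsClosed (V : Set C(K, ℝ))) {σ : C(ℝ, ℝ)}
    (hσ : ∀ α β, powMulAffineComp K σ 0 α β ∈ V) :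
    ∃ g : ℕ → C(ℝ, ℝ), (∀ n, ContDiff ℝ ∞ (g n)) ∧
      (∀ x, Tendsto (fun n => g n x) atTop (𝓝 (σ x))) ∧
      ∀ n α β, powMulAffineComp K (g n) 0 α β ∈ V := by
  let ψ (n : ℕ) : ContDiffBump (0 : ℝ) :=
    ⟨(n + 1 : ℝ)⁻¹ / 2, (n + 1 : ℝ)⁻¹, by positivity, half_lt_self (by positivity)⟩
  have hψ : Tendsto (fun n => (ψ n).rOut) atTop (𝓝 0) := by
    simpa using tendsto_one_div_add_atTop_nhds_zero_nat (𝕜 := ℝ)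
  have hsmooth (n : ℕ) :
      ContDiff ℝ ∞ ((ψ n).normed volume ⋆[ContinuousLinearMap.lsmul ℝ ℝ, volume] σ) :=
    (ψ n).hasCompactSupport_normed.contDiff_convolution_left _ (ψ n).contDiff_normed
      σ.continuous.locallyIntegrable
  refine ⟨fun n => ⟨_, (hsmooth n).continuous⟩, hsmooth,
    fun x => ContDiffBump.convolution_tendsto_right_of_continuous hψ σ.continuous x,
    fun n => powMulAffineComp_mem_of_eq_integral hV hσ ((ψ n).continuous_normed (μ := volume))
      (ψ n).hasCompactSupport_normed fun x => ?_⟩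
  simp [convolution_def]

theorem X_pow_mem_of_not_polynomial [CompactSpace K] {V : Submodule ℝ C(K, ℝ)}
    (hV : IsClosed (V : Set C(K, ℝ))) {σ : C(ℝ, ℝ)}
    (hnp : ¬ ∃ p : ℝ[X], ∀ x, σ x = p.eval x) (hσ : ∀ α β, powMulAffineComp K σ 0 α β ∈ V)
    (k : ℕ) : toContinuousMapOnAlgHom K (X ^ k) ∈ V := by
  obtain ⟨g, hg, hlim, hgV⟩ := exists_contDiff_tendsto_of_powMulAffineComp_mem hV hσ
  -- Otherwise every `g n` has vanishing `k`-th derivative.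
  by_contra hk
  have hpoly (n : ℕ) : ⇑(g n) ∈ polyFunDegreeLT k := by
    refine mem_polyFunDegreeLT_of_iteratedDeriv_eq_zero
      ((hg n).of_le (by exact_mod_cast le_top)) (funext fun β => ?_)
    by_contra hne
    have := V.smul_mem (iteratedDeriv k (g n) β)⁻¹
      (iteratedDeriv_smul_X_pow_mem hV (hg n) (hgV n) k β)
    exact hk (by rwa [smul_smul, inv_mul_cancel₀ hne, one_smul] at this)
  obtain ⟨p, -, hp⟩ := mem_polyFunDegreeLT.mp <| (isClosed_polyFunDegreeLT k).mem_of_tendsto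
    (tendsto_pi_nhds.mpr hlim) (Eventually.of_forall hpoly)
  exact hnp ⟨p, fun x => (hp x).symm⟩

theorem dense_span_powMulAffineComp [CompactSpace K] {σ : C(ℝ, ℝ)}
    (hnp : ¬ ∃ p : ℝ[X], ∀ x, σ x = p.eval x) :
    Dense (Submodule.span ℝ (range fun p : ℝ × ℝ => powMulAffineComp K σ 0 p.1 p.2) :
      Set C(K, ℝ)) := by
  set V := (Submodule.span ℝ
    (range fun p : ℝ × ℝ => powMulAffineComp K σ 0 p.1 p.2)).topologicalClosure
  have hV : IsClosed (V : Set C(K, ℝ)) := Submodule.isClosed_topologicalClosure _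
  have hpow := X_pow_mem_of_not_polynomial hV hnp fun α β =>
    Submodule.le_topologicalClosure _ (Submodule.subset_span ⟨(α, β), rfl⟩)
  have hpoly : (polynomialFunctions K).toSubmodule ≤ V := by
    rintro _ ⟨p, -, rfl⟩
    induction p using Polynomial.induction_on' with
    | add p q hp hq => rw [map_add]; exact V.add_mem hp hq
    | monomial n a =>
      simpa [← C_mul_X_pow_eq_monomial, ← smul_eq_C_mul] using V.smul_mem a (hpow n)
  have hweierstrass := ContinuousMap.subalgebra_topologicalClosure_eq_top_of_separatesPoints _
    (polynomialFunctions_separatesPoints K)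
  rw [Submodule.dense_iff_topologicalClosure_eq_top, eq_top_iff]
  intro f _
  have hf : f ∈ closure (polynomialFunctions K : Set C(K, ℝ)) := by
    rw [← Subalgebra.topologicalClosure_coe, hweierstrass]; trivial
  exact hV.closure_subset_iff.mpr hpoly hf

end PowMulAffineComp

theorem not_dense_span_eval_comp_affine (p : ℝ[X]) :
    ¬ Dense (Submodule.span ℝ
      {F : C(ℝ, ℝ) | ∃ α β : ℝ, ∀ x, F x = p.eval (α * x + β)} : Set C(ℝ, ℝ)) := by
  set U := (polyFunDegreeLT (p.natDegree + 1)).comap (ContinuousMap.coeFnLinearMap ℝ (M := ℝ))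
  have hU : IsClosed (U : Set C(ℝ, ℝ)) := (isClosed_polyFunDegreeLT _).preimage
    (continuous_pi fun x => continuous_eval_const x)
  have hspan :
      Submodule.span ℝ {F : C(ℝ, ℝ) | ∃ α β : ℝ, ∀ x, F x = p.eval (α * x + β)} ≤ U := by
    refine Submodule.span_le.mpr ?_
    rintro F ⟨α, β, hF⟩
    exact (funext hF ▸ eval_comp_affine_mem_polyFunDegreeLT p α β :)
  intro hdense
  have hmem : (⟨fun x : ℝ => x ^ (p.natDegree + 1), by fun_prop⟩ : C(ℝ, ℝ)) ∈ U :=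
    hU.closure_subset_iff.mpr hspan (hdense _)
  exact pow_notMem_polyFunDegreeLT _ hmem

theorem translates_dilates_dense_iff_general (σ : ℝ → ℝ) (hσc : Continuous σ) :
    Dense (Submodule.span ℝ
        {F : C(ℝ, ℝ) | ∃ α β : ℝ, ∀ x : ℝ, F x = σ (α * x + β)} : Set C(ℝ, ℝ)) ↔
      ¬ ∃ p : Polynomial ℝ, ∀ x : ℝ, σ x = p.eval x := by
  constructor
  · rintro hdense ⟨p, hp⟩
    simp only [hp] at hdense
    exact not_dense_span_eval_comp_affine p hdense
  · intro hnp
    refine ContinuousMap.dense_of_dense_restrict fun K hK => ?_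
    have := isCompact_iff_compactSpace.mp hK
    let restrict : C(ℝ, ℝ) →ₗ[ℝ] C(K, ℝ) :=
      (ContinuousMap.compRightAlgHom ℝ ℝ ⟨Subtype.val, continuous_subtype_val⟩).toLinearMap
    refine (dense_span_powMulAffineComp (σ := ⟨σ, hσc⟩) hnp).mono ?_
    change _ ⊆ restrict '' _
    rw [← Submodule.map_coe, SetLike.coe_subset_coe, Submodule.span_le]
    rintro _ ⟨⟨α, β⟩, rfl⟩
    exact ⟨⟨fun x => σ (α * x + β), by fun_prop⟩, Submodule.subset_span ⟨α, β, fun x => rfl⟩,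
      by ext x; simp [restrict, powMulAffineComp_apply]⟩

/-- For σ ∈ C(ℝ), σ ≠ 0, the span of x ↦ σ(αx + β), α, β ∈ ℝ, is dense in C(ℝ)
(compact-open topology) iff σ is not a polynomial. -/
theorem translates_dilates_dense_iff (σ : ℝ → ℝ) (hσc : Continuous σ) (hσ : σ ≠ 0) :
    Dense (Submodule.span ℝ
        {F : C(ℝ, ℝ) | ∃ α β : ℝ, ∀ x : ℝ, F x = σ (α * x + β)} : Set C(ℝ, ℝ)) ↔
      ¬ ∃ p : Polynomial ℝ, ∀ x : ℝ, σ x = p.eval x :=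
  translates_dilates_dense_iff_general σ hσc
end

section
/- Bonsall's theorem: the closure, in the uniform norm on [−1,0], of the set of algebraic polynomials with nonnegative coefficients is exactly the set of continuous real-valued functions f on [−1,0] with f(0) ≥ 0. -/
open Polynomial

noncomputable section

/-- The key elementary inequality `(n+1) t (1-t)^n ≤ 1` on `[0,1]`. -/
lemma bonsall_key (n : ℕ) (t : ℝ) (h0 : 0 ≤ t) (h1 : t ≤ 1) :
    ((n : ℝ) + 1) * t * (1 - t) ^ n ≤ 1 := by
  have h2 : (0:ℝ) ≤ 1 - t := by linarith
  have hterm : ((n:ℝ) + 1) * t * (1 - t) ^ n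
      = t ^ 1 * (1 - t) ^ (n + 1 - 1) * ((n+1).choose 1) := by
    simp [Nat.choose_one_right]; ring
  have hsum : t ^ 1 * (1 - t) ^ (n + 1 - 1) * ((n+1).choose 1)
      ≤ ∑ k ∈ Finset.range (n + 2), t ^ k * (1 - t) ^ (n + 1 - k) * ((n+1).choose k) := by
    apply Finset.single_le_sum (f := fun k => t ^ k * (1 - t) ^ (n + 1 - k) * (((n+1).choose k : ℝ)))
    · intro i _
      positivity
    · simp
  have hbin : (∑ k ∈ Finset.range (n + 2), t ^ k * (1 - t) ^ (n + 1 - k) * ((n+1).choose k))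
      = (t + (1 - t)) ^ (n + 1) := (add_pow t (1 - t) (n + 1)).symm
  rw [hterm]
  calc _ ≤ _ := hsum
    _ = (t + (1 - t)) ^ (n + 1) := hbin
    _ = 1 := by norm_num

/-- The set of (restrictions of) polynomials with nonnegative coefficients. -/
def bonsallS : Set C(Set.Icc (-1:ℝ) 0, ℝ) :=
  {F | ∃ p : Polynomial ℝ, (∀ k, 0 ≤ p.coeff k) ∧ ∀ x : Set.Icc (-1:ℝ) 0, F x = p.eval (x : ℝ)}

lemma mem_bonsallS {p : ℝ[X]} (hp : ∀ k, 0 ≤ p.coeff k) :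
    p.toContinuousMapOn (Set.Icc (-1:ℝ) 0) ∈ bonsallS :=
  ⟨p, hp, fun x => by simp⟩

/-- `bonsallS` as an additive submonoid. -/
def bonsallM : AddSubmonoid C(Set.Icc (-1:ℝ) 0, ℝ) where
  carrier := bonsallS
  zero_mem' := ⟨0, by simp, fun x => by simp⟩
  add_mem' := by
    rintro a b ⟨p, hp, ha⟩ ⟨q, hq, hb⟩
    exact ⟨p + q, fun k => by simpa using add_nonneg (hp k) (hq k),
      fun x => by simp [ha x, hb x]⟩

lemma bonsall_closure_eq :
    (bonsallM.topologicalClosure : Set C(Set.Icc (-1:ℝ) 0, ℝ)) = closure bonsallS := rfl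

/-- Approximation of negative monomials `c x^{k+1}`, `c ≤ 0`. -/
lemma bonsall_neg_monomial (k : ℕ) (c : ℝ) (hc : c ≤ 0) :
    (monomial (k+1) c : ℝ[X]).toContinuousMapOn (Set.Icc (-1:ℝ) 0) ∈ closure bonsallS := by
  rw [Metric.mem_closure_iff]
  intro ε hε
  obtain ⟨n, hn⟩ := exists_nat_gt (-c / ε)
  set p : ℝ[X] := C (-c) * (((1 + X) ^ n - 1) * X ^ (k+1)) with hp
  have hcoeff : ∀ m, 0 ≤ p.coeff m := by
    intro m
    rw [hp, coeff_C_mul, coeff_mul_X_pow']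
    rcases le_or_gt (k+1) m with h | h
    · rw [if_pos h]
      rcases Nat.eq_zero_or_pos (m - (k+1)) with h0 | h0
      · rw [h0]
        simp [coeff_sub, coeff_one_add_X_pow]
      · have hco : ((1 + X : ℝ[X]) ^ n - 1).coeff (m - (k+1)) = n.choose (m-(k+1)) := by
          rw [coeff_sub, coeff_one_add_X_pow, coeff_one, if_neg (by omega)]
          ring
        rw [hco]
        exact mul_nonneg (by linarith) (by positivity)
    · rw [if_neg (by omega)]
      simp
  refine ⟨p.toContinuousMapOn _, mem_bonsallS hcoeff, ?_⟩
  have hεn : -c / ((n:ℝ) + 1) < ε := by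
    rw [div_lt_iff₀ hε] at hn
    rw [div_lt_iff₀ (by positivity)]
    nlinarith [hε.le]
  have hd : dist ((monomial (k+1) c : ℝ[X]).toContinuousMapOn (Set.Icc (-1:ℝ) 0))
      (p.toContinuousMapOn (Set.Icc (-1:ℝ) 0)) ≤ -c / ((n:ℝ) + 1) := by
    have hc' : (0:ℝ) ≤ -c := neg_nonneg.mpr hc
    rw [ContinuousMap.dist_le (by positivity)]
    rintro ⟨x, hx1, hx2⟩
    have h1x : (0:ℝ) ≤ 1 + x := by linarith
    have key := bonsall_key n (-x) (by linarith) (by linarith)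
    rw [show (1 : ℝ) - -x = 1 + x by ring] at key
    rw [Real.dist_eq]
    simp only [toContinuousMapOn_apply, toContinuousMap_apply]
    have hev : (monomial (k+1) c).eval x - p.eval x = c * (x^(k+1) * (1+x)^n) := by
      simp [hp, eval_monomial]
      ring
    rw [hev, abs_mul, abs_of_nonpos hc, abs_mul, abs_pow, abs_of_nonneg (pow_nonneg h1x n)]
    have hxabs : |x| = -x := abs_of_nonpos hx2
    have hxle : |x| ^ (k+1) ≤ -x := by
      rw [hxabs]
      calc (-x) ^ (k+1) ≤ (-x) ^ 1 :=
            pow_le_pow_of_le_one (by linarith) (by linarith) (by omega)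
        _ = -x := pow_one _
    have hpow : (0:ℝ) ≤ (1+x)^n := pow_nonneg h1x n
    have hc'' : (0:ℝ) ≤ -c := neg_nonneg.mpr hc
    have h1 : |x| ^ (k+1) * (1+x)^n ≤ (-x) * (1+x)^n :=
      mul_le_mul_of_nonneg_right hxle hpow
    rw [le_div_iff₀ (by positivity)]
    nlinarith [mul_le_mul_of_nonneg_left
        (mul_le_mul_of_nonneg_left h1 hc'') (by positivity : (0:ℝ) ≤ (n:ℝ)+1),
      mul_le_mul_of_nonneg_left key hc'']
  exact lt_of_le_of_lt hd hεn

lemma bonsall_monomial (k : ℕ) (c : ℝ) :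
    (monomial (k+1) c : ℝ[X]).toContinuousMapOn (Set.Icc (-1:ℝ) 0) ∈ closure bonsallS := by
  rcases le_or_gt 0 c with h | h
  · exact subset_closure (mem_bonsallS (fun m => by
      rw [coeff_monomial]
      split <;> simp [h]))
  · exact bonsall_neg_monomial k c h.le

lemma bonsall_poly (q : ℝ[X]) (hq : 0 ≤ q.coeff 0) :
    q.toContinuousMapOn (Set.Icc (-1:ℝ) 0) ∈ closure bonsallS := by
  have hrepr : q.toContinuousMapOn (Set.Icc (-1:ℝ) 0)
      = ∑ i ∈ Finset.range (q.natDegree + 1),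
          (monomial i (q.coeff i)).toContinuousMapOn (Set.Icc (-1:ℝ) 0) := by
    conv_lhs => rw [as_sum_range' q (q.natDegree + 1) (Nat.lt_succ_self _)]
    exact map_sum (toContinuousMapOnAlgHom (Set.Icc (-1:ℝ) 0)) _ _
  rw [hrepr, ← bonsall_closure_eq]
  apply AddSubmonoid.sum_mem
  intro i _
  cases i with
  | zero =>
      exact subset_closure (mem_bonsallS (fun m => by
        rw [coeff_monomial]
        split <;> simp [hq]))
  | succ j => exact bonsall_monomial j (q.coeff (j+1))

end

set_option maxHeartbeats 1000000 in
set_option synthInstance.maxHeartbeats 400000 in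
/-- Bonsall's theorem: the uniform closure on [-1,0] of the polynomials with nonnegative
coefficients is exactly the set of continuous functions f on [-1,0] with f(0) ≥ 0. -/
theorem bonsall :
    closure {F : C(Set.Icc (-1:ℝ) 0, ℝ) | ∃ p : Polynomial ℝ,
        (∀ k, 0 ≤ p.coeff k) ∧ ∀ x : Set.Icc (-1:ℝ) 0, F x = p.eval (x : ℝ)} =
      {F : C(Set.Icc (-1:ℝ) 0, ℝ) | 0 ≤ F ⟨0, by constructor <;> norm_num⟩} := by
  have hz : (0:ℝ) ∈ Set.Icc (-1:ℝ) 0 := by constructor <;> norm_num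
  apply subset_antisymm
  · apply closure_minimal
    · rintro F ⟨p, hp, hF⟩
      show (0:ℝ) ≤ F _
      rw [hF ⟨0, hz⟩]
      simpa [← coeff_zero_eq_eval_zero] using hp 0
    · exact (isClosed_Ici (a := (0:ℝ))).preimage (continuous_eval_const _)
  · intro F hF
    have h0 : (0:ℝ) ≤ F ⟨0, hz⟩ := hF
    have : F ∈ closure (closure bonsallS) := by
      rw [Metric.mem_closure_iff]
      intro ε hε
      have hW : F ∈ closure
          (polynomialFunctions (Set.Icc (-1:ℝ) 0) : Set C(Set.Icc (-1:ℝ) 0, ℝ)) := by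
        rw [← Subalgebra.topologicalClosure_coe, polynomialFunctions_closure_eq_top (-1:ℝ) 0]
        simp
      obtain ⟨g, hg, hdist⟩ := Metric.mem_closure_iff.mp hW (ε/2) (by positivity)
      rw [polynomialFunctions_coe] at hg
      obtain ⟨q, rfl⟩ := hg
      set δ : ℝ := F ⟨0, hz⟩ - q.eval 0 with hδdef
      have hδ : |δ| ≤ ε/2 := by
        have h1 := ContinuousMap.dist_apply_le_dist
          (f := F) (g := (toContinuousMapOnAlgHom (Set.Icc (-1:ℝ) 0)) q) ⟨0, hz⟩
        have h2 : dist (F ⟨0, hz⟩) (((toContinuousMapOnAlgHom (Set.Icc (-1:ℝ) 0)) q) ⟨0, hz⟩)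
            = |δ| := by
          simp [hδdef, Real.dist_eq]
        linarith [h1, h2.symm.le, hdist.le]
      set q' : ℝ[X] := q + C δ with hq'def
      have hq'0 : 0 ≤ q'.coeff 0 := by
        have hc0 : q'.coeff 0 = F ⟨0, hz⟩ := by
          rw [hq'def, coeff_add, coeff_C_zero, coeff_zero_eq_eval_zero, hδdef]
          ring
        rw [hc0]
        exact h0
      refine ⟨q'.toContinuousMapOn _, bonsall_poly q' hq'0, ?_⟩
      have htri := dist_triangle F ((toContinuousMapOnAlgHom (Set.Icc (-1:ℝ) 0)) q)
        (q'.toContinuousMapOn (Set.Icc (-1:ℝ) 0))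
      have hconst : dist ((toContinuousMapOnAlgHom (Set.Icc (-1:ℝ) 0)) q)
          (q'.toContinuousMapOn (Set.Icc (-1:ℝ) 0)) ≤ |δ| := by
        rw [ContinuousMap.dist_le (abs_nonneg δ)]
        intro x
        simp [hq'def, Real.dist_eq]
      calc dist F (q'.toContinuousMapOn (Set.Icc (-1:ℝ) 0)) ≤ _ + _ := htri
        _ < ε/2 + ε/2 := by
            apply add_lt_add_of_lt_of_le hdist
            calc _ ≤ |δ| := hconst
              _ ≤ ε/2 := hδ
        _ = ε := by ring
    rwa [closure_closure] at this
end

section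
/- For any real number a < −1, the closure in the uniform norm on [a,1] of the set of algebraic polynomials with nonnegative coefficients contains every continuous real-valued function f on [a,1] that vanishes identically on [−1,1]. -/
/-!
Let `S` be the uniform closure of the polynomials with nonnegative coefficients; it is a closed
subsemiring of `C([a, 1], ℝ)`. If both `u` and `-u` lie in `S`, then `p * u ∈ S` for every
polynomial `p` (split `p` into the parts with positive and negative coefficients), hence
`f * u ∈ S` for every continuous `f` by Weierstrass, and the closed ideal generated by `u` lies
in `S`. For `u x = (x + 1)⁻` this ideal consists of all functions vanishing on `[-1, 1]`, by the
description of the closed ideals of `C(K, ℝ)`.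

It remains to approximate `u` and `-u`, by `(x + 1) * p x` and `u x * p x` respectively, where
`p x = (1 + x ^ N / B) ^ K - 1` with `N` odd has nonnegative coefficients and, for suitable
`N, K, B`, is close to `-1` on `[a, -1 - δ]`, close to `0` on `[-1, 1]` and bounded by `1`
on `[a, 1]`.
-/

open Polynomial Set

namespace Polynomial

section Semiring

variable {R : Type*} [Semiring R] [PartialOrder R] [IsOrderedRing R]

def nonnegCoeffs : Subsemiring R[X] where
  carrier := {p | ∀ k, 0 ≤ p.coeff k}
  mul_mem' hp hq k := by
    rw [coeff_mul]
    exact Finset.sum_nonneg fun _ _ => mul_nonneg (hp _) (hq _)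
  one_mem' k := by
    rw [coeff_one]
    split_ifs <;> simp
  add_mem' hp hq k := by
    rw [coeff_add]
    exact add_nonneg (hp k) (hq k)
  zero_mem' _ := by simp

theorem mem_nonnegCoeffs {p : R[X]} : p ∈ nonnegCoeffs ↔ ∀ k, 0 ≤ p.coeff k := Iff.rfl

theorem monomial_mem_nonnegCoeffs {a : R} (ha : 0 ≤ a) (n : ℕ) :
    monomial n a ∈ nonnegCoeffs := fun k => by
  rw [coeff_monomial]
  split_ifs <;> simp [ha]

theorem C_mem_nonnegCoeffs {a : R} (ha : 0 ≤ a) : C a ∈ nonnegCoeffs :=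
  monomial_mem_nonnegCoeffs ha 0

theorem X_mem_nonnegCoeffs : (X : R[X]) ∈ nonnegCoeffs :=
  monomial_mem_nonnegCoeffs zero_le_one 1

end Semiring

theorem exists_mem_nonnegCoeffs_eq_sub {R : Type*} [Ring R] [LinearOrder R] [IsOrderedRing R]
    (p : R[X]) : ∃ q ∈ nonnegCoeffs, ∃ r ∈ nonnegCoeffs, p = q - r := by
  induction p using Polynomial.induction_on' with
  | add p p' hp hp' =>
    obtain ⟨q, hq, r, hr, rfl⟩ := hp
    obtain ⟨q', hq', r', hr', rfl⟩ := hp'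
    exact ⟨q + q', add_mem hq hq', r + r', add_mem hr hr', sub_add_sub_comm q r q' r'⟩
  | monomial n a =>
    rcases le_total 0 a with ha | ha
    · exact ⟨monomial n a, monomial_mem_nonnegCoeffs ha n, 0, zero_mem _, by simp⟩
    · refine ⟨0, zero_mem _, monomial n (-a), monomial_mem_nonnegCoeffs (neg_nonneg.2 ha) n, ?_⟩
      simp

end Polynomial

theorem Subsemiring.one_add_pow_sub_one_mem {R : Type*} [Ring R] (S : Subsemiring R) {q : R}
    (hq : q ∈ S) (n : ℕ) : (1 + q) ^ n - 1 ∈ S := by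
  rw [← geom_sum_mul, add_sub_cancel_left]
  exact mul_mem (sum_mem fun i _ => pow_mem (add_mem (one_mem S) hq) i) hq

noncomputable def nonnegCoeffFunctions (s : Set ℝ) : Subsemiring C(s, ℝ) :=
  nonnegCoeffs.map (toContinuousMapOnAlgHom s : ℝ[X] →+* C(s, ℝ))

theorem coe_nonnegCoeffFunctions (s : Set ℝ) :
    (nonnegCoeffFunctions s : Set C(s, ℝ)) =
      {G | ∃ p : ℝ[X], (∀ k, 0 ≤ p.coeff k) ∧ ∀ x : s, G x = p.eval (x : ℝ)} := by
  ext G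
  simp [nonnegCoeffFunctions, mem_nonnegCoeffs, ContinuousMap.ext_iff, eq_comm]

theorem ContinuousMap.mem_closure_of_forall_exists_abs_sub_le {X : Type*} [TopologicalSpace X]
    [CompactSpace X] {T : Set C(X, ℝ)} {f : C(X, ℝ)}
    (h : ∀ ε > 0, ∃ g ∈ T, ∀ x, |f x - g x| ≤ ε) : f ∈ closure T := by
  refine Metric.mem_closure_iff.2 fun ε hε => ?_
  obtain ⟨g, hg, hfg⟩ := h (ε / 2) (half_pos hε)
  exact ⟨g, hg, ((ContinuousMap.dist_le (half_pos hε).le).2 hfg).trans_lt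
    (half_lt_self hε)⟩

theorem mul_mem_topologicalClosure_nonnegCoeffFunctions {α β : ℝ} {u : C(Icc α β, ℝ)}
    (hu : u ∈ (nonnegCoeffFunctions (Icc α β)).topologicalClosure)
    (hnu : -u ∈ (nonnegCoeffFunctions (Icc α β)).topologicalClosure) (f : C(Icc α β, ℝ)) :
    f * u ∈ (nonnegCoeffFunctions (Icc α β)).topologicalClosure := by
  set S := (nonnegCoeffFunctions (Icc α β)).topologicalClosure
  have hpoly : (polynomialFunctions (Icc α β) : Set C(Icc α β, ℝ)) ⊆ {f | f * u ∈ S} := by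
    rw [polynomialFunctions_coe]
    rintro _ ⟨p, rfl⟩
    obtain ⟨q, hq, r, hr, rfl⟩ := exists_mem_nonnegCoeffs_eq_sub p
    have hq' : toContinuousMapOnAlgHom _ q ∈ S :=
      Subsemiring.le_topologicalClosure _ (Subsemiring.mem_map.2 ⟨q, hq, rfl⟩)
    have hr' : toContinuousMapOnAlgHom _ r ∈ S :=
      Subsemiring.le_topologicalClosure _ (Subsemiring.mem_map.2 ⟨r, hr, rfl⟩)
    rw [mem_ofPred_eq, map_sub, sub_mul, sub_eq_add_neg, ← mul_neg]
    exact add_mem (mul_mem hq' hu) (mul_mem hr' hnu)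
  have hclosed : IsClosed {f : C(Icc α β, ℝ) | f * u ∈ S} :=
    (Subsemiring.isClosed_topologicalClosure _).preimage (continuous_mul_const u)
  have hdense : closure (polynomialFunctions (Icc α β) : Set C(Icc α β, ℝ)) = univ := by
    rw [← Subalgebra.topologicalClosure_coe, polynomialFunctions_closure_eq_top]
    rfl
  exact (hdense ▸ closure_minimal hpoly hclosed) (mem_univ f)

theorem closure_span_singleton_subset_topologicalClosure {α β : ℝ} {u : C(Icc α β, ℝ)}
    (hu : u ∈ (nonnegCoeffFunctions (Icc α β)).topologicalClosure)
    (hnu : -u ∈ (nonnegCoeffFunctions (Icc α β)).topologicalClosure) :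
    ((Ideal.span {u}).closure : Set C(Icc α β, ℝ)) ⊆
      (nonnegCoeffFunctions (Icc α β)).topologicalClosure := by
  rw [Ideal.coe_closure]
  refine closure_minimal ?_ (Subsemiring.isClosed_topologicalClosure _)
  intro _ hf
  obtain ⟨f, rfl⟩ := Ideal.mem_span_singleton'.1 hf
  exact mul_mem_topologicalClosure_nonnegCoeffFunctions hu hnu f

section Bernoulli

variable {R : Type*} [CommRing R] [LinearOrder R] [IsStrictOrderedRing R] {t : R}

theorem one_sub_mul_le_one_sub_pow (ht : t ≤ 2) (K : ℕ) : 1 - K * t ≤ (1 - t) ^ K := by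
  simpa only [mul_neg, ← sub_eq_add_neg] using one_add_mul_le_pow (a := -t) (by linarith) K

theorem one_sub_pow_mul_one_add_pow_le_one (h0 : 0 ≤ t) (h1 : t ≤ 1) (K : ℕ) :
    (1 - t) ^ K * (1 + t) ^ K ≤ 1 := by
  rw [← mul_pow]
  exact pow_le_one₀ (by nlinarith) (by nlinarith)

theorem one_sub_pow_mul_one_add_mul_le_one (h0 : 0 ≤ t) (h1 : t ≤ 1) (K : ℕ) :
    (1 - t) ^ K * (1 + K * t) ≤ 1 :=
  (mul_le_mul_of_nonneg_left (one_add_mul_le_pow (by linarith) K)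
    (pow_nonneg (by linarith) K)).trans (one_sub_pow_mul_one_add_pow_le_one h0 h1 K)

theorem one_add_pow_mul_one_sub_mul_le_one (h0 : 0 ≤ t) (h1 : t ≤ 1) (K : ℕ) :
    (1 + t) ^ K * (1 - K * t) ≤ 1 :=
  (mul_le_mul_of_nonneg_left (one_sub_mul_le_one_sub_pow (by linarith) K)
    (pow_nonneg (by linarith) K)).trans
    (mul_comm ((1 + t) ^ K) _ ▸ one_sub_pow_mul_one_add_pow_le_one h0 h1 K)

theorem one_add_pow_sub_one_le_two_mul (h0 : 0 ≤ t) (h1 : t ≤ 1) {K : ℕ} (hKt : 2 * (K * t) ≤ 1) :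
    (1 + t) ^ K - 1 ≤ 2 * (K * t) := by
  have h := one_add_pow_mul_one_sub_mul_le_one h0 h1 K
  have hle : (1 + t) ^ K ≤ 2 := by
    nlinarith [mul_nonneg (pow_nonneg (by linarith : (0 : R) ≤ 1 + t) K) (sub_nonneg.2 hKt)]
  nlinarith [mul_le_mul_of_nonneg_right hle (by positivity : (0 : R) ≤ K * t)]

theorem abs_one_sub_pow_sub_one_le_one (h0 : 0 ≤ t) (h1 : t ≤ 1) (K : ℕ) :
    |(1 - t) ^ K - 1| ≤ 1 := by
  have := pow_nonneg (sub_nonneg.2 h1) K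
  have := pow_le_one₀ (n := K) (sub_nonneg.2 h1) (by linarith : 1 - t ≤ 1)
  rw [abs_le]
  constructor <;> linarith

theorem abs_one_sub_pow_sub_one_le_mul (h0 : 0 ≤ t) (h1 : t ≤ 1) (K : ℕ) :
    |(1 - t) ^ K - 1| ≤ K * t := by
  have := pow_le_one₀ (n := K) (sub_nonneg.2 h1) (by linarith : 1 - t ≤ 1)
  have := one_sub_mul_le_one_sub_pow (h1.trans one_le_two) K
  rw [abs_of_nonpos (by linarith)]
  linarith

theorem one_sub_pow_le_of_one_le_mul (h0 : 0 ≤ t) (h1 : t ≤ 1) {K : ℕ} {ε : R} (hε : 0 ≤ ε)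
    (hKt : 1 ≤ ε * (K * t)) : (1 - t) ^ K ≤ ε := by
  have hpow := pow_nonneg (sub_nonneg.2 h1) K
  calc (1 - t) ^ K ≤ (1 - t) ^ K * (ε * (K * t)) := le_mul_of_one_le_right hpow hKt
    _ = ε * ((1 - t) ^ K * (K * t)) := by ring
    _ ≤ ε * 1 := by
      gcongr
      linarith [one_sub_pow_mul_one_add_mul_le_one h0 h1 K]
    _ = ε := mul_one ε

end Bernoulli

theorem abs_one_add_pow_sub_one_le_of_odd {N K : ℕ} {B b c ε x : ℝ} (hN : Odd N) (hB : 1 ≤ B)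
    (hbB : b ^ N ≤ B) (hKB : K / B ≤ ε / 2) (hε : ε ≤ 1) (hc : 0 < c)
    (hKc : 1 ≤ ε * (K * c ^ N / B)) (hxb : -b ≤ x) (hx1 : x ≤ 1) :
    |(1 + B⁻¹ * x ^ N) ^ K - 1| ≤ 1 ∧ (-1 ≤ x → |(1 + B⁻¹ * x ^ N) ^ K - 1| ≤ ε) ∧
      (x ≤ -c → |(1 + B⁻¹ * x ^ N) ^ K - 1 + 1| ≤ ε) := by
  have hB0 : 0 < B := by linarith
  have hε0 : 0 ≤ ε := by
    have := (div_nonneg K.cast_nonneg hB0.le).trans hKB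
    linarith
  have hKt {y : ℝ} (hy0 : 0 ≤ y) (hy1 : y ≤ 1) : K * (B⁻¹ * y ^ N) ≤ K / B := by
    rw [div_eq_mul_inv]
    gcongr
    exact mul_le_of_le_one_right (by positivity) (pow_le_one₀ hy0 hy1)
  rcases le_total 0 x with hx | hx
  · have ht0 : 0 ≤ B⁻¹ * x ^ N := by positivity
    have ht1 : B⁻¹ * x ^ N ≤ 1 :=
      (inv_mul_le_one₀ hB0).2 ((pow_le_one₀ hx hx1).trans hB)
    have h := one_add_pow_sub_one_le_two_mul (K := K) ht0 ht1 (by linarith [hKt hx hx1])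
    have hv : |(1 + B⁻¹ * x ^ N) ^ K - 1| ≤ ε := by
      rw [abs_of_nonneg (sub_nonneg.2 (one_le_pow₀ (by linarith)))]
      linarith [hKt hx hx1]
    exact ⟨hv.trans hε, fun _ => hv, fun h => absurd (h.trans_lt (neg_neg_of_pos hc)) hx.not_gt⟩
  · obtain ⟨y, rfl⟩ : ∃ y, x = -y := ⟨-x, (neg_neg x).symm⟩
    rw [hN.neg_pow, mul_neg, ← sub_eq_add_neg, sub_add_cancel]
    have hy0 : 0 ≤ y := by linarith
    have ht0 : 0 ≤ B⁻¹ * y ^ N := by positivity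
    have ht1 : B⁻¹ * y ^ N ≤ 1 :=
      (inv_mul_le_one₀ hB0).2 ((pow_le_pow_left₀ hy0 (by linarith) N).trans hbB)
    refine ⟨abs_one_sub_pow_sub_one_le_one ht0 ht1 K, fun hy1 => ?_, fun hyc => ?_⟩
    · exact (abs_one_sub_pow_sub_one_le_mul ht0 ht1 K).trans
        ((hKt hy0 (by linarith)).trans (by linarith))
    · rw [abs_of_nonneg (pow_nonneg (by linarith) K)]
      refine one_sub_pow_le_of_one_le_mul ht0 ht1 hε0 (hKc.trans ?_)
      rw [mul_div_assoc, div_eq_inv_mul]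
      gcongr
      linarith

theorem exists_step_params {b c ε : ℝ} (hc : 1 < c) (hcb : c ≤ b) (hε : 0 < ε) :
    ∃ N K : ℕ, ∃ B : ℝ, Odd N ∧ 1 ≤ B ∧ b ^ N ≤ B ∧ K / B ≤ ε / 2 ∧
      1 ≤ ε * (K * c ^ N / B) := by
  obtain ⟨n, hn⟩ := pow_unbounded_of_one_lt (2 / ε ^ 2) hc
  have hcN : 2 / ε ^ 2 ≤ c ^ (2 * n + 1) := hn.le.trans (pow_le_pow_right₀ hc.le (by omega))
  set N := 2 * n + 1
  set K := ⌈(b / c) ^ N / ε⌉₊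
  have hc0 : 0 < c ^ N := pow_pos (by linarith) N
  have hK0 : (0 : ℝ) < K :=
    Nat.cast_pos.2 (Nat.ceil_pos.2 (by have := hc.trans_le hcb; positivity))
  have hbB : b ^ N ≤ ε * K * c ^ N := by
    calc b ^ N = ε * ((b / c) ^ N / ε) * c ^ N := by field_simp; rw [div_pow]; field_simp
      _ ≤ ε * K * c ^ N := by gcongr; exact Nat.le_ceil _
  refine ⟨N, K, ε * K * c ^ N, odd_two_mul_add_one n,
    (one_le_pow₀ (hc.le.trans hcb)).trans hbB, hbB, ?_, le_of_eq ?_⟩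
  · rw [div_le_div_iff₀ (by positivity) two_pos]
    rw [div_le_iff₀ (by positivity)] at hcN
    nlinarith
  · field_simp

theorem exists_mem_nonnegCoeffs_step {b c ε : ℝ} (hc : 1 < c) (hcb : c ≤ b) (hε : 0 < ε)
    (hε1 : ε ≤ 1) :
    ∃ p ∈ nonnegCoeffs, ∀ x ∈ Icc (-b) 1, |p.eval x| ≤ 1 ∧ (-1 ≤ x → |p.eval x| ≤ ε) ∧
      (x ≤ -c → |p.eval x + 1| ≤ ε) := by
  obtain ⟨N, K, B, hN, hB, hbB, hKB, hKc⟩ := exists_step_params hc hcb hε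
  have hq : C B⁻¹ * X ^ N ∈ nonnegCoeffs :=
    mul_mem (C_mem_nonnegCoeffs (inv_nonneg.2 (by linarith))) (pow_mem X_mem_nonnegCoeffs N)
  refine ⟨(1 + C B⁻¹ * X ^ N) ^ K - 1, Subsemiring.one_add_pow_sub_one_mem _ hq K,
    fun x hx => ?_⟩
  simpa using abs_one_add_pow_sub_one_le_of_odd hN hB hbB hKB hε1 (by linarith) hKc hx.1 hx.2

theorem abs_mul_sub_negPart_le {b δ x v : ℝ} (hδ : 0 ≤ δ) (hxb : -b ≤ x) (hx1 : x ≤ 1)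
    (hv : |v| ≤ 1) (h1 : -1 ≤ x → |v| ≤ δ) (h2 : x ≤ -(1 + δ) → |v + 1| ≤ δ) :
    |(x + 1) * v - (x + 1)⁻| ≤ (b + 3) * δ := by
  rcases le_or_gt (-1) x with hx | hx
  · rw [negPart_eq_zero.2 (by linarith), sub_zero, abs_mul, abs_of_nonneg (by linarith)]
    nlinarith [h1 hx, abs_nonneg v]
  · rw [negPart_eq_neg.2 (by linarith), sub_neg_eq_add, ← mul_add_one, abs_mul,
      abs_of_neg (by linarith)]
    rcases le_or_gt x (-(1 + δ)) with hxδ | hxδ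
    · nlinarith [h2 hxδ, abs_nonneg (v + 1)]
    · have : |v + 1| ≤ 2 := (abs_add_le v 1).trans (by rw [abs_one]; linarith)
      nlinarith

theorem exists_mem_nonnegCoeffs_abs_mul_sub_negPart_le {b ε : ℝ} (hb : 2 ≤ b) (hε : 0 < ε) :
    ∃ p ∈ nonnegCoeffs, ∀ x ∈ Icc (-b) 1, |(x + 1) * p.eval x - (x + 1)⁻| ≤ ε := by
  set δ := min 1 (ε / (b + 3))
  have hδ0 : 0 < δ := lt_min one_pos (by positivity)
  have hδ1 : δ ≤ 1 := min_le_left _ _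
  obtain ⟨p, hp, hpx⟩ :=
    exists_mem_nonnegCoeffs_step (b := b) (c := 1 + δ) (by linarith) (by linarith) hδ0 hδ1
  refine ⟨p, hp, fun x hx => ?_⟩
  obtain ⟨h0, h1, h2⟩ := hpx x hx
  calc _ ≤ (b + 3) * δ := abs_mul_sub_negPart_le hδ0.le hx.1 hx.2 h0 h1 h2
    _ ≤ ε := by
      rw [← le_div_iff₀' (by linarith)]
      exact min_le_right _ _

theorem abs_negPart_mul_add_one_le {R : Type*} [Ring R] [LinearOrder R] [IsOrderedRing R]
    (y v : R) : |y⁻ * (v + 1)| ≤ |y * v - y⁻| := by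
  rcases le_total 0 y with hy | hy
  · rw [negPart_eq_zero.2 hy, zero_mul, abs_zero]
    exact abs_nonneg _
  · rw [negPart_eq_neg.2 hy, neg_mul, abs_neg, sub_neg_eq_add, mul_add_one]

noncomputable def negPartAddOne (s : Set ℝ) : C(s, ℝ) := ⟨fun x => ((x : ℝ) + 1)⁻, by fun_prop⟩

theorem negPartAddOne_mem_and_neg_mem (a : ℝ) :
    negPartAddOne (Icc a 1) ∈ (nonnegCoeffFunctions (Icc a 1)).topologicalClosure ∧
      -negPartAddOne (Icc a 1) ∈ (nonnegCoeffFunctions (Icc a 1)).topologicalClosure := by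
  set S := (nonnegCoeffFunctions (Icc a 1)).topologicalClosure
  have hS : closure (S : Set C(Icc a 1, ℝ)) = S :=
    (Subsemiring.isClosed_topologicalClosure _).closure_eq
  have hmem : ∀ p ∈ nonnegCoeffs, toContinuousMapOnAlgHom (Icc a 1) p ∈ S := fun p hp =>
    Subsemiring.le_topologicalClosure _ (Subsemiring.mem_map.2 ⟨p, hp, rfl⟩)
  have happrox : ∀ ε > 0, ∃ p ∈ nonnegCoeffs,
      ∀ x : Icc a 1, |((x : ℝ) + 1) * p.eval (x : ℝ) - ((x : ℝ) + 1)⁻| ≤ ε := fun ε hε => by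
    obtain ⟨p, hp, h⟩ := exists_mem_nonnegCoeffs_abs_mul_sub_negPart_le (le_max_right (-a) 2) hε
    exact ⟨p, hp, fun x => h x ⟨by linarith [le_max_left (-a) 2, x.2.1], x.2.2⟩⟩
  have hu : negPartAddOne (Icc a 1) ∈ S := by
    rw [← SetLike.mem_coe, ← hS]
    refine ContinuousMap.mem_closure_of_forall_exists_abs_sub_le fun ε hε => ?_
    obtain ⟨p, hp, h⟩ := happrox ε hε
    refine ⟨toContinuousMapOnAlgHom _ ((X + 1) * p),
      hmem _ (mul_mem (add_mem X_mem_nonnegCoeffs (one_mem _)) hp), fun x => ?_⟩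
    rw [abs_sub_comm]
    simpa [negPartAddOne] using h x
  refine ⟨hu, ?_⟩
  rw [← SetLike.mem_coe, ← hS]
  refine ContinuousMap.mem_closure_of_forall_exists_abs_sub_le fun ε hε => ?_
  obtain ⟨p, hp, h⟩ := happrox ε hε
  refine ⟨negPartAddOne _ * toContinuousMapOnAlgHom _ p, mul_mem hu (hmem p hp), fun x => ?_⟩
  calc _ = |((x : ℝ) + 1)⁻ * (p.eval (x : ℝ) + 1)| := by
        rw [← abs_neg]
        congr 1
        simp only [negPartAddOne, ContinuousMap.neg_apply, ContinuousMap.mul_apply,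
          ContinuousMap.coe_mk, toContinuousMapOnAlgHom_apply, toContinuousMapOn_apply,
          toContinuousMap_apply]
        ring
    _ ≤ ε := (abs_negPart_mul_add_one_le _ _).trans (h x)

theorem nussbaum_walsh_general (a : ℝ) (F : C(Set.Icc a 1, ℝ))
    (hF : ∀ x : Set.Icc a 1, (x : ℝ) ∈ Set.Icc (-1:ℝ) 1 → F x = 0) :
    F ∈ closure {G : C(Set.Icc a 1, ℝ) | ∃ p : Polynomial ℝ,
        (∀ k, 0 ≤ p.coeff k) ∧ ∀ x : Set.Icc a 1, G x = p.eval (x : ℝ)} := by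
  rw [← coe_nonnegCoeffFunctions, ← Subsemiring.topologicalClosure_coe]
  obtain ⟨hu, hnu⟩ := negPartAddOne_mem_and_neg_mem a
  refine closure_span_singleton_subset_topologicalClosure hu hnu ?_
  rw [SetLike.mem_coe, ← ContinuousMap.idealOfSet_ofIdeal_eq_closure,
    ContinuousMap.mem_idealOfSet]
  intro x hx
  rw [mem_compl_iff, ContinuousMap.notMem_setOfIdeal] at hx
  have hux : ((x : ℝ) + 1)⁻ = 0 := hx (Ideal.mem_span_singleton_self _)
  exact hF x ⟨by linarith [negPart_eq_zero.1 hux], x.2.2⟩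

/-- For a < -1, the uniform closure on [a,1] of the polynomials with nonnegative
coefficients contains every continuous function on [a,1] vanishing identically on [-1,1]. -/
theorem nussbaum_walsh (a : ℝ) (ha : a < -1) (F : C(Set.Icc a 1, ℝ))
    (hF : ∀ x : Set.Icc a 1, (x : ℝ) ∈ Set.Icc (-1:ℝ) 1 → F x = 0) :
    F ∈ closure {G : C(Set.Icc a 1, ℝ) | ∃ p : Polynomial ℝ,
        (∀ k, 0 ≤ p.coeff k) ∧ ∀ x : Set.Icc a 1, G x = p.eval (x : ℝ)} :=
  nussbaum_walsh_general a F hF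
end

section
/- Let σ ∈ C(ℝ) and n ≥ 1. The linear span of the ridge functions x ↦ σ(⟨a, x⟩ + b), over all a ∈ ℝⁿ and b ∈ ℝ, is dense in C(ℝⁿ) in the topology of uniform convergence on compact subsets if and only if σ is not a polynomial. -/
/-!
A polynomial profile of degree `m` gives ridge functions that restrict, on a line, to polynomials
of degree at most `m`; these form a closed proper subspace, so the span is not dense.

Conversely, let `V` be the closure of the span, and `W` the closed subspace of profiles
`τ ∈ C(ℝ)` all of whose ridge functions `x ↦ τ(⟨a, x⟩ + b)` lie in `V`. Then `W` contains `σ`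
and is invariant under affine changes of variable. Sliding averages `h⁻¹ ∫₀ʰ τ(· + y) dy` are
locally uniform limits of Riemann sums of translates, so `W` is closed under them, and they raise
smoothness by one. A Baire category argument in `h` shows that some sliding average of a
non-polynomial is again a non-polynomial. Hence `W` contains, for every `k`, a non-polynomial `C^k`
profile `τ`, with `τ⁽ᵏ⁾(b) ≠ 0` for some `b`, and the rescaled finite differences
`h⁻ᵏ Δᵏ_{h t} τ(b) → tᵏ τ⁽ᵏ⁾(b)` put every monomial, hence by Weierstrass every function, into
`W`. In particular `V` contains every `x ↦ exp ⟨a, x⟩`; these span a point-separating subalgebra,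
which is dense by Stone–Weierstrass.
-/

open Filter Topology Polynomial Set MeasureTheory
open scoped fwdDiff

namespace ContinuousMap

variable {X : Type*} [TopologicalSpace X]

theorem mem_closure_of_forall_isCompact_approx {A : Set C(X, ℝ)} {F : C(X, ℝ)}
    (h : ∀ K : Set X, IsCompact K → ∀ ε > 0, ∃ G ∈ A, ∀ x ∈ K, |F x - G x| ≤ ε) :
    F ∈ closure A := by
  rw [mem_closure_iff_nhds_basis
    (nhds_basis_uniformity' (x := F) ContinuousMap.hasBasis_compactConvergenceUniformity)]
  rintro ⟨K, U⟩ ⟨hK, hU⟩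
  obtain ⟨ε, hε, hεU⟩ := Metric.mem_uniformity_dist.1 hU
  obtain ⟨G, hGA, hG⟩ := h K hK (ε / 2) (half_pos hε)
  exact ⟨G, hGA, fun x hx => hεU <| by
    rw [Real.dist_eq]; exact (hG x hx).trans_lt (half_lt_self hε)⟩

end ContinuousMap

theorem Subalgebra.SeparatesPoints.dense {X : Type*} [TopologicalSpace X]
    {A : Subalgebra ℝ C(X, ℝ)} (hA : A.SeparatesPoints) : Dense (A : Set C(X, ℝ)) := fun F =>
  ContinuousMap.mem_closure_of_forall_isCompact_approx fun _K hK _ε hε => by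
    obtain ⟨G, hGA, hG⟩ :=
      ContinuousMap.exists_mem_subalgebra_near_continuous_of_isCompact_of_separatesPoints hA F hK hε
    exact ⟨G, hGA, fun x hx => by rw [abs_sub_comm]; exact (hG x hx).le⟩

theorem abs_integral_sub_mul_le_of_forall_le {f : ℝ → ℝ} (hf : Continuous f) {a d η : ℝ}
    (hd : 0 ≤ d) (hη : ∀ y ∈ Icc a (a + d), |f y - f a| ≤ η) :
    |(∫ y in a..a + d, f y) - d * f a| ≤ d * η := by
  have hconst : d * f a = ∫ _ in a..a + d, f a := by simp
  rw [hconst, ← intervalIntegral.integral_sub (hf.intervalIntegrable _ _) intervalIntegrable_const]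
  have := intervalIntegral.norm_integral_le_of_norm_le_const (a := a) (b := a + d)
    (f := fun y => f y - f a) (C := η) fun y hy => by
      rw [uIoc_of_le (by linarith)] at hy
      exact hη y (Ioc_subset_Icc_self hy)
  simpa [abs_of_nonneg hd, mul_comm] using this

theorem abs_integral_sub_riemannSum_le {f : ℝ → ℝ} (hf : Continuous f) {d η : ℝ} (hd : 0 ≤ d)
    (m : ℕ) (hη : ∀ i < m, ∀ y ∈ Icc (i * d) (i * d + d), |f y - f (i * d)| ≤ η) :
    |(∫ y in (0 : ℝ)..m * d, f y) - ∑ i ∈ Finset.range m, d * f (i * d)| ≤ m * (d * η) := by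
  induction m with
  | zero => simp
  | succ m ih =>
    have hsplit : (∫ y in (0 : ℝ)..(m + 1 : ℕ) * d, f y) =
        (∫ y in (0 : ℝ)..m * d, f y) + ∫ y in m * d..m * d + d, f y := by
      rw [intervalIntegral.integral_add_adjacent_intervals (hf.intervalIntegrable _ _)
        (hf.intervalIntegrable _ _)]
      push_cast; ring_nf
    rw [hsplit, Finset.sum_range_succ]
    calc _ ≤ |(∫ y in (0 : ℝ)..m * d, f y) - ∑ i ∈ Finset.range m, d * f (i * d)|
          + |(∫ y in m * d..m * d + d, f y) - d * f (m * d)| := by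
          refine le_of_eq_of_le ?_ (abs_add_le _ _)
          ring_nf
      _ ≤ m * (d * η) + d * η := add_le_add (ih fun i hi => hη i (by omega))
          (abs_integral_sub_mul_le_of_forall_le hf hd (hη m (by omega)))
      _ = _ := by push_cast; ring

theorem exists_riemannSum_approx {f : ℝ → ℝ} (hf : Continuous f) {h : ℝ} (hh : 0 < h) (a b : ℝ)
    {ε : ℝ} (hε : 0 < ε) : ∃ m : ℕ, 0 < m ∧ ∀ t ∈ Icc a b,
      |(∫ y in (0 : ℝ)..h, f (t + y)) - ∑ i ∈ Finset.range m, h / m * f (t + i * (h / m))| ≤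
        h * ε := by
  obtain ⟨δ, hδ, hf_unif⟩ := Metric.uniformContinuousOn_iff_le.1
    (isCompact_Icc.uniformContinuousOn_of_continuous (s := Icc a (b + h)) hf.continuousOn) ε hε
  obtain ⟨m, hm⟩ := exists_nat_gt (h / δ)
  have hm_pos : (0 : ℝ) < m := (div_pos hh hδ).trans hm
  have hd_pos : 0 < h / m := div_pos hh hm_pos
  have hd : h / m ≤ δ := by rw [div_le_iff₀ hm_pos]; rw [div_lt_iff₀ hδ] at hm; linarith
  have hmd : (m : ℝ) * (h / m) = h := by field_simp
  refine ⟨m, by exact_mod_cast hm_pos, fun t ht => ?_⟩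
  have hmem : ∀ u ∈ Icc (0 : ℝ) h, t + u ∈ Icc a (b + h) := fun u hu =>
    ⟨by linarith [ht.1, hu.1], by linarith [ht.2, hu.2]⟩
  have key := abs_integral_sub_riemannSum_le (f := fun y => f (t + y)) (by fun_prop)
    hd_pos.le m (η := ε) fun i hi y hy => by
      have hi_le : (i : ℝ) * (h / m) + h / m ≤ h := by
        have := mul_le_mul_of_nonneg_right (show (i : ℝ) + 1 ≤ m by exact_mod_cast hi) hd_pos.le
        linarith
      have hi_nonneg : 0 ≤ (i : ℝ) * (h / m) := by positivity
      rw [← Real.dist_eq]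
      refine hf_unif _ (hmem y ⟨by linarith [hy.1], by linarith [hy.2]⟩) _
        (hmem _ ⟨hi_nonneg, by linarith⟩) ?_
      rw [Real.dist_eq, add_sub_add_left_eq_sub, abs_of_nonneg (by linarith [hy.1])]
      linarith [hy.2]
  rwa [hmd, ← mul_assoc, hmd] at key

theorem exists_degree_lt_of_tendsto {ι : Type*} {l : Filter ι} [l.NeBot] {m : ℕ}
    {f : ι → ℝ → ℝ} {g : ℝ → ℝ}
    (hf : ∀ᶠ i in l, ∃ p : ℝ[X], p.degree < m ∧ ∀ t, f i t = p.eval t)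
    (hlim : ∀ t, Tendsto (fun i => f i t) l (𝓝 (g t))) :
    ∃ q : ℝ[X], q.degree < m ∧ ∀ t, g t = q.eval t := by
  classical
  set s : Finset ℝ := (Finset.range m).image (Nat.cast : ℕ → ℝ)
  have hcard : s.card = m := by
    rw [Finset.card_image_of_injective _ Nat.cast_injective, Finset.card_range]
  have hinj : InjOn (id : ℝ → ℝ) s := injOn_id _
  have hdeg := Lagrange.degree_interpolate_lt (v := id) g hinj
  rw [hcard] at hdeg
  refine ⟨Lagrange.interpolate s id g, hdeg, fun t => ?_⟩
  -- Lagrange interpolation on the `m` nodes of `s` reproduces each `f i`; pass to the limit.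
  have hinterp : ∀ᶠ i in l, f i t = ∑ r ∈ s, f i r * (Lagrange.basis s id r).eval t := by
    filter_upwards [hf] with i hi
    obtain ⟨p, hp_deg, hp⟩ := hi
    rw [hp, Lagrange.eq_interpolate (f := p) hinj (by rwa [hcard]), Lagrange.interpolate_apply,
      eval_finsetSum]
    simp [hp]
  have := (tendsto_finsetSum s fun r _ => (hlim r).mul_const ((Lagrange.basis s id r).eval t))
  rw [tendsto_nhds_unique (hlim t) (this.congr' (hinterp.mono fun i hi => hi.symm)),
    Lagrange.interpolate_apply, eval_finsetSum]
  simp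

theorem isClosed_setOf_exists_degree_lt {G : ℝ → ℝ → ℝ} (hG : ∀ t, Continuous fun h => G h t)
    (m : ℕ) : IsClosed {h | ∃ p : ℝ[X], p.degree < m ∧ ∀ t, G h t = p.eval t} := by
  refine isClosed_of_closure_subset fun h₀ hh₀ => ?_
  have := mem_closure_iff_nhdsWithin_neBot.1 hh₀
  exact exists_degree_lt_of_tendsto self_mem_nhdsWithin
    fun t => ((hG t).tendsto h₀).mono_left nhdsWithin_le_nhds

theorem exists_degree_lt_of_hasDerivAt {G : ℝ → ℝ → ℝ} {g : ℝ → ℝ} {h₀ : ℝ} {m : ℕ}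
    (hG : ∀ᶠ h in 𝓝 h₀, ∃ p : ℝ[X], p.degree < m ∧ ∀ t, G h t = p.eval t)
    (hderiv : ∀ t, HasDerivAt (fun h => G h t) (g t) h₀) :
    ∃ q : ℝ[X], q.degree < m ∧ ∀ t, g t = q.eval t := by
  obtain ⟨p₀, hp₀_deg, hp₀⟩ := hG.self_of_nhds
  refine exists_degree_lt_of_tendsto (l := 𝓝[≠] h₀) (f := fun h t => slope (G · t) h₀ h) ?_
    fun t => hasDerivAt_iff_tendsto_slope.1 (hderiv t)
  filter_upwards [nhdsWithin_le_nhds hG] with h hh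
  obtain ⟨p, hp_deg, hp⟩ := hh
  refine ⟨(h - h₀)⁻¹ • (p - p₀), (degree_smul_le _ _).trans_lt ?_, fun t => ?_⟩
  · exact (degree_sub_le _ _).trans_lt (max_lt hp_deg hp₀_deg)
  · simp [slope_def_field, hp, hp₀, div_eq_inv_mul]

theorem exists_poly_of_forall_poly_of_hasDerivAt {G g : ℝ → ℝ → ℝ}
    (hG : ∀ h, ∃ p : ℝ[X], ∀ t, G h t = p.eval t)
    (hderiv : ∀ h t, HasDerivAt (fun h => G h t) (g h t) h) :
    ∃ h₀, ∃ q : ℝ[X], ∀ t, g h₀ t = q.eval t := by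
  have hcover : ⋃ m : ℕ, {h | ∃ p : ℝ[X], p.degree < m ∧ ∀ t, G h t = p.eval t} = univ := by
    refine eq_univ_of_forall fun h => mem_iUnion.2 ?_
    obtain ⟨p, hp⟩ := hG h
    exact ⟨p.natDegree + 1, p,
      degree_le_natDegree.trans_lt (by exact_mod_cast p.natDegree.lt_succ_self), hp⟩
  -- Baire: one of the closed sets of bounded degree has an interior point.
  obtain ⟨m, h₀, hh₀⟩ := nonempty_interior_of_iUnion_of_closed
    (fun m => isClosed_setOf_exists_degree_lt (fun t => continuous_iff_continuousAt.2
      fun h => (hderiv h t).continuousAt) m) hcover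
  obtain ⟨q, -, hq⟩ := exists_degree_lt_of_hasDerivAt (mem_interior_iff_mem_nhds.1 hh₀) (hderiv h₀)
  exact ⟨h₀, q, hq⟩

theorem Polynomial.exists_derivative_eq {K : Type*} [Field K] [CharZero K] (q : K[X]) :
    ∃ Q : K[X], derivative Q = q := by
  induction q using Polynomial.induction_on' with
  | add p q hp hq =>
    obtain ⟨P, hP⟩ := hp
    obtain ⟨Q, hQ⟩ := hq
    exact ⟨P + Q, by rw [derivative_add, hP, hQ]⟩
  | monomial n c =>
    refine ⟨C (c / (n + 1)) * X ^ (n + 1), ?_⟩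
    rw [derivative_C_mul_X_pow, ← C_mul_X_pow_eq_monomial]
    congr 1
    push_cast
    field_simp

theorem exists_poly_of_iteratedDeriv_eq_zero {k : ℕ} {f : ℝ → ℝ} (hf : ContDiff ℝ k f)
    (hk : ∀ t, iteratedDeriv k f t = 0) : ∃ p : ℝ[X], ∀ t, f t = p.eval t := by
  induction k generalizing f with
  | zero => exact ⟨0, by simpa using hk⟩
  | succ k ih =>
    obtain ⟨hf_diff, -, hf'⟩ := contDiff_succ_iff_deriv.1 (by exact_mod_cast hf :
      ContDiff ℝ ((k : WithTop ℕ∞) + 1) f)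
    obtain ⟨q, hq⟩ := ih hf' fun t => by rw [← iteratedDeriv_succ']; exact hk t
    obtain ⟨Q, hQ⟩ := q.exists_derivative_eq
    have hconst (t : ℝ) : f t - Q.eval t = f 0 - Q.eval 0 :=
      is_const_of_deriv_eq_zero (f := fun t => f t - Q.eval t) (hf_diff.sub Q.differentiable)
        (fun x => by
          rw [deriv_fun_sub (hf_diff x) Q.differentiableAt, Polynomial.deriv, hQ, hq, sub_self])
        t 0
    exact ⟨Q + C (f 0 - Q.eval 0), fun t => by
      rw [eval_add, eval_C, ← hconst t]; ring⟩

theorem integral_comp_add_eq_sub {f : ℝ → ℝ} (hf : Continuous f) (t h : ℝ) :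
    ∫ y in (0 : ℝ)..h, f (t + y) = (∫ y in (0 : ℝ)..t + h, f y) - ∫ y in (0 : ℝ)..t, f y := by
  rw [intervalIntegral.integral_comp_add_left, add_zero,
    intervalIntegral.integral_interval_sub_left (hf.intervalIntegrable _ _)
      (hf.intervalIntegrable _ _)]

theorem hasDerivAt_integral_comp_add {f : ℝ → ℝ} (hf : Continuous f) (h t : ℝ) :
    HasDerivAt (fun t => ∫ y in (0 : ℝ)..h, f (t + y)) (f (t + h) - f t) t := by
  simp only [integral_comp_add_eq_sub hf]
  exact ((hf.integral_hasStrictDerivAt 0 (t + h)).hasDerivAt.comp t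
    ((hasDerivAt_id t).add_const h) |>.congr_deriv (mul_one _)).sub
    (hf.integral_hasStrictDerivAt 0 t).hasDerivAt

noncomputable def slidingAverage (h : ℝ) (τ : C(ℝ, ℝ)) : C(ℝ, ℝ) :=
  ⟨fun t => h⁻¹ * ∫ y in (0 : ℝ)..h, τ (t + y), by fun_prop⟩

theorem slidingAverage_apply (h : ℝ) (τ : C(ℝ, ℝ)) (t : ℝ) :
    slidingAverage h τ t = h⁻¹ * ∫ y in (0 : ℝ)..h, τ (t + y) := rfl

theorem contDiff_slidingAverage {k : ℕ} (h : ℝ) {τ : C(ℝ, ℝ)} (hτ : ContDiff ℝ k τ) :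
    ContDiff ℝ (k + 1 : ℕ) (slidingAverage h τ) := by
  have hderiv (t : ℝ) : HasDerivAt (slidingAverage h τ) (h⁻¹ * (τ (t + h) - τ t)) t :=
    (hasDerivAt_integral_comp_add τ.continuous h t).const_mul _
  rw [Nat.cast_add, Nat.cast_one, contDiff_succ_iff_deriv]
  refine ⟨fun t => (hderiv t).differentiableAt, by simp, ?_⟩
  rw [funext fun t => (hderiv t).deriv]
  exact contDiff_const.mul ((hτ.comp (contDiff_id.add contDiff_const)).sub hτ)

theorem exists_slidingAverage_not_poly {τ : C(ℝ, ℝ)} (hτ : ¬ ∃ p : ℝ[X], ∀ t, τ t = p.eval t) :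
    ∃ h > 0, ¬ ∃ p : ℝ[X], ∀ t, slidingAverage h τ t = p.eval t := by
  by_contra! hpoly
  set G : ℝ → ℝ → ℝ := fun h t => ∫ y in (0 : ℝ)..h, τ (t + y)
  have hG_pos : ∀ h > 0, ∃ p : ℝ[X], ∀ t, G h t = p.eval t := fun h hh => by
    obtain ⟨p, hp⟩ := hpoly h hh
    refine ⟨C h * p, fun t => ?_⟩
    rw [eval_mul, eval_C, ← hp, slidingAverage_apply, mul_inv_cancel_left₀ hh.ne']
  -- For `h < 0`, `G h t = -G (-h) (t + h)`.
  have hG : ∀ h, ∃ p : ℝ[X], ∀ t, G h t = p.eval t := fun h => by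
    rcases lt_trichotomy h 0 with hneg | rfl | hpos
    · obtain ⟨p, hp⟩ := hG_pos (-h) (neg_pos.2 hneg)
      refine ⟨-p.comp (X + C h), fun t => ?_⟩
      simp only [G, eval_neg, eval_comp, eval_add, eval_X, eval_C, ← hp,
        integral_comp_add_eq_sub τ.continuous]
      ring_nf
    · exact ⟨0, by simp [G]⟩
    · exact hG_pos h hpos
  have hderiv (h t : ℝ) : HasDerivAt (fun h => G h t) (τ (t + h)) h := by
    simp only [G, integral_comp_add_eq_sub τ.continuous]
    exact ((τ.continuous.integral_hasStrictDerivAt 0 (t + h)).hasDerivAt.comp h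
      ((hasDerivAt_id h).const_add t) |>.congr_deriv (mul_one _)).sub_const _
  obtain ⟨h₀, q, hq⟩ := exists_poly_of_forall_poly_of_hasDerivAt hG hderiv
  exact hτ ⟨q.comp (X - C h₀), fun t => by simpa using hq (t - h₀)⟩

theorem Continuous.fwdDiff_iter {f : ℝ → ℝ} (hf : Continuous f) (s : ℝ) (k : ℕ) :
    Continuous ((Δ_[s])^[k] f) := by
  induction k with
  | zero => exact hf
  | succ k ih =>
    rw [Function.iterate_succ_apply']
    exact (ih.comp (continuous_add_const s)).sub ih

theorem fwdDiff_iter_succ_eq_integral {f : ℝ → ℝ} (hf : Differentiable ℝ f)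
    (hf' : Continuous (deriv f)) (s : ℝ) (k : ℕ) (t : ℝ) :
    (Δ_[s])^[k + 1] f t = ∫ u in (0 : ℝ)..s, (Δ_[s])^[k] (deriv f) (t + u) := by
  induction k generalizing t with
  | zero =>
    rw [Function.iterate_one, fwdDiff, Function.iterate_zero, id,
      intervalIntegral.integral_comp_add_left, add_zero,
      intervalIntegral.integral_deriv_eq_sub (fun x _ => hf x) (hf'.intervalIntegrable _ _)]
  | succ k ih =>
    have hint (c : ℝ) : IntervalIntegrable (fun u => (Δ_[s])^[k] (deriv f) (c + u)) volume 0 s :=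
      ((hf'.fwdDiff_iter s k).comp (continuous_const_add c)).intervalIntegrable _ _
    rw [Function.iterate_succ_apply', fwdDiff, ih, ih,
      ← intervalIntegral.integral_sub (hint _) (hint _)]
    refine intervalIntegral.integral_congr fun u _ => ?_
    rw [Function.iterate_succ_apply' _ k, fwdDiff, add_right_comm]

theorem exists_abs_fwdDiff_iter_sub_le (k : ℕ) {f : ℝ → ℝ} (hf : ContDiff ℝ k f) (b : ℝ) {ε : ℝ}
    (hε : 0 < ε) : ∃ δ > 0, ∀ s t : ℝ, |s| ≤ δ → |t - b| ≤ δ →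
      |(Δ_[s])^[k] f t - s ^ k * iteratedDeriv k f b| ≤ ε * |s| ^ k := by
  induction k generalizing f with
  | zero =>
    obtain ⟨δ, hδ, hfδ⟩ := Metric.continuousAt_iff.1 hf.continuous.continuousAt ε hε
    refine ⟨δ / 2, half_pos hδ, fun s t _ ht => ?_⟩
    have := hfδ (x := t) (by rw [Real.dist_eq]; linarith)
    rw [Real.dist_eq] at this
    simpa using this.le
  | succ k ih =>
    obtain ⟨hf_diff, -, hf'⟩ := contDiff_succ_iff_deriv.1 (by exact_mod_cast hf :
      ContDiff ℝ ((k : WithTop ℕ∞) + 1) f)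
    obtain ⟨δ, hδ, hδf'⟩ := ih hf'
    refine ⟨δ / 2, half_pos hδ, fun s t hs ht => ?_⟩
    have hconst : s ^ (k + 1) * iteratedDeriv (k + 1) f b =
        ∫ _ in (0 : ℝ)..s, s ^ k * iteratedDeriv k (deriv f) b := by
      rw [iteratedDeriv_succ', intervalIntegral.integral_const, smul_eq_mul]; ring
    have hint : IntervalIntegrable (fun u => (Δ_[s])^[k] (deriv f) (t + u)) volume 0 s :=
      ((hf'.continuous.fwdDiff_iter s k).comp (continuous_const_add t)).intervalIntegrable _ _
    rw [fwdDiff_iter_succ_eq_integral hf_diff hf'.continuous, hconst,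
      ← intervalIntegral.integral_sub hint intervalIntegrable_const]
    have hbound : ∀ u ∈ uIoc (0 : ℝ) s,
        ‖(Δ_[s])^[k] (deriv f) (t + u) - s ^ k * iteratedDeriv k (deriv f) b‖ ≤ ε * |s| ^ k :=
      fun u hu => by
        have hu_s : |u| ≤ |s| := by
          simpa using Set.abs_sub_left_of_mem_uIcc (Set.uIoc_subset_uIcc hu)
        refine hδf' s (t + u) (by linarith) ?_
        calc |t + u - b| = |(t - b) + u| := by ring_nf
          _ ≤ |t - b| + |u| := abs_add_le _ _
          _ ≤ δ := by linarith
    calc _ ≤ ε * |s| ^ k * |s - 0| := intervalIntegral.norm_integral_le_of_norm_le_const hbound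
      _ = ε * |s| ^ (k + 1) := by rw [sub_zero]; ring

theorem exists_abs_fwdDiff_iter_dilate_sub_le {k : ℕ} {f : ℝ → ℝ} (hf : ContDiff ℝ k f) (b R : ℝ)
    {ε : ℝ} (hε : 0 < ε) : ∃ h > 0, ∀ t, |t| ≤ R →
      |(h ^ k)⁻¹ * (Δ_[h * t])^[k] f b - t ^ k * iteratedDeriv k f b| ≤ ε := by
  set R' := max R 1
  have hR' : 0 < R' := lt_max_of_lt_right one_pos
  obtain ⟨δ, hδ, hfδ⟩ := exists_abs_fwdDiff_iter_sub_le k hf b (div_pos hε (pow_pos hR' k))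
  refine ⟨δ / R', div_pos hδ hR', fun t ht => ?_⟩
  have ht' : |t| ≤ R' := ht.trans (le_max_left _ _)
  have hs : |δ / R' * t| ≤ δ := by
    rw [abs_mul, abs_of_pos (div_pos hδ hR'), div_mul_eq_mul_div, div_le_iff₀ hR']
    exact mul_le_mul_of_nonneg_left ht' hδ.le
  have hbound := hfδ _ b hs (by simpa using hδ.le)
  have hpos : 0 < (δ / R') ^ k := pow_pos (div_pos hδ hR') k
  calc _ = ((δ / R') ^ k)⁻¹ *
        |(Δ_[δ / R' * t])^[k] f b - (δ / R' * t) ^ k * iteratedDeriv k f b| := by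
        rw [← abs_of_pos (inv_pos.2 hpos), ← abs_mul, mul_sub, mul_pow, ← mul_assoc (_⁻¹),
          ← mul_assoc (_⁻¹), inv_mul_cancel₀ hpos.ne', one_mul, abs_of_pos (inv_pos.2 hpos)]
    _ ≤ ((δ / R') ^ k)⁻¹ * (ε / R' ^ k * |δ / R' * t| ^ k) := by gcongr
    _ = ε * (|t| / R') ^ k := by
        rw [abs_mul, abs_of_pos (div_pos hδ hR'), mul_pow, div_pow, div_pow]
        field_simp
    _ ≤ ε := mul_le_of_le_one_right hε.le
        (pow_le_one₀ (by positivity) ((div_le_one hR').2 ht'))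

section Ridge

variable {E : Type*} [NormedAddCommGroup E] [InnerProductSpace ℝ E]

noncomputable def ridge (a : E) (b : ℝ) : C(ℝ, ℝ) →ₐ[ℝ] C(E, ℝ) :=
  ContinuousMap.compRightAlgHom ℝ ℝ ⟨fun x => inner ℝ a x + b, by fun_prop⟩

@[simp] theorem ridge_apply (a : E) (b : ℝ) (τ : C(ℝ, ℝ)) (x : E) :
    ridge a b τ x = τ (inner ℝ a x + b) := rfl

theorem ridge_real_apply (s c : ℝ) (τ : C(ℝ, ℝ)) (t : ℝ) : ridge s c τ t = τ (s * t + c) := by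
  simp [mul_comm]

theorem continuous_ridge (a : E) (b : ℝ) : Continuous (ridge a b) :=
  ContinuousMap.compRightAlgHom_continuous ℝ ℝ _

theorem ridge_ridge (a : E) (b s c : ℝ) (τ : C(ℝ, ℝ)) :
    ridge a b (ridge s c τ) = ridge (s • a) (s * b + c) τ := by
  ext x
  rw [ridge_apply, ridge_real_apply, ridge_apply, real_inner_smul_left]
  ring_nf

end Ridge

def IsAffineInvariant (W : Submodule ℝ C(ℝ, ℝ)) : Prop :=
  ∀ τ ∈ W, ∀ s c : ℝ, ridge s c τ ∈ W

section AffineInvariant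

variable {W : Submodule ℝ C(ℝ, ℝ)}

theorem slidingAverage_mem (hW : IsClosed (W : Set C(ℝ, ℝ))) (hinv : IsAffineInvariant W)
    {τ : C(ℝ, ℝ)} (hτ : τ ∈ W) {h : ℝ} (hh : 0 < h) : slidingAverage h τ ∈ W := by
  refine hW.closure_subset <|
    ContinuousMap.mem_closure_of_forall_isCompact_approx fun K hK ε hε => ?_
  obtain ⟨a, ha⟩ := hK.bddBelow
  obtain ⟨b, hb⟩ := hK.bddAbove
  obtain ⟨m, -, hsum⟩ := exists_riemannSum_approx τ.continuous hh a b hε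
  refine ⟨∑ i ∈ Finset.range m, (m : ℝ)⁻¹ • ridge 1 (i * (h / m)) τ,
    W.sum_mem fun i _ => W.smul_mem _ (hinv τ hτ 1 _), fun t ht => ?_⟩
  have hG : (∑ i ∈ Finset.range m, (m : ℝ)⁻¹ • ridge 1 (i * (h / m)) τ) t =
      h⁻¹ * ∑ i ∈ Finset.range m, h / m * τ (t + i * (h / m)) := by
    simp only [ContinuousMap.sum_apply, ContinuousMap.smul_apply, ridge_real_apply, one_mul,
      smul_eq_mul, Finset.mul_sum]
    refine Finset.sum_congr rfl fun i _ => ?_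
    field_simp
  rw [hG, slidingAverage_apply, ← mul_sub, abs_mul, abs_of_pos (inv_pos.2 hh)]
  calc _ ≤ h⁻¹ * (h * ε) := by gcongr; exact hsum t ⟨ha ht, hb ht⟩
    _ = ε := by field_simp

theorem exists_contDiff_not_poly_mem (hW : IsClosed (W : Set C(ℝ, ℝ))) (hinv : IsAffineInvariant W)
    {σ : C(ℝ, ℝ)} (hσW : σ ∈ W) (hσ : ¬ ∃ p : ℝ[X], ∀ t, σ t = p.eval t) (k : ℕ) :
    ∃ τ ∈ W, ContDiff ℝ k τ ∧ ¬ ∃ p : ℝ[X], ∀ t, τ t = p.eval t := by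
  induction k with
  | zero => exact ⟨σ, hσW, contDiff_zero.2 σ.continuous, hσ⟩
  | succ k ih =>
    obtain ⟨τ, hτW, hτ, hτ_np⟩ := ih
    obtain ⟨h, hh, hnp⟩ := exists_slidingAverage_not_poly hτ_np
    exact ⟨slidingAverage h τ, slidingAverage_mem hW hinv hτW hh, contDiff_slidingAverage h hτ, hnp⟩

theorem exists_mem_eq_fwdDiff_iter_dilate (hinv : IsAffineInvariant W) {τ : C(ℝ, ℝ)} (hτ : τ ∈ W)
    (k : ℕ) (h b : ℝ) : ∃ G ∈ W, ∀ t, G t = (Δ_[h * t])^[k] τ b := by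
  refine ⟨∑ i ∈ Finset.range (k + 1), ((-1 : ℤ) ^ (k - i) * k.choose i) • ridge (i * h) b τ,
    W.sum_mem fun i _ => zsmul_mem (hinv τ hτ _ _) _, fun t => ?_⟩
  simp only [fwdDiff_iter_eq_sum_shift, ContinuousMap.sum_apply, ContinuousMap.smul_apply,
    ridge_real_apply, nsmul_eq_mul]
  refine Finset.sum_congr rfl fun i _ => ?_
  ring_nf

theorem toContinuousMap_X_pow_mem (hW : IsClosed (W : Set C(ℝ, ℝ))) (hinv : IsAffineInvariant W)
    {τ : C(ℝ, ℝ)} (hτW : τ ∈ W) {k : ℕ} (hτ : ContDiff ℝ k τ) {b : ℝ}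
    (hb : iteratedDeriv k τ b ≠ 0) : (X ^ k : ℝ[X]).toContinuousMap ∈ W := by
  refine hW.closure_subset <|
    ContinuousMap.mem_closure_of_forall_isCompact_approx fun K hK ε hε => ?_
  obtain ⟨R, hR⟩ := hK.exists_bound_of_continuousOn continuous_id.continuousOn
  set D := iteratedDeriv k τ b
  obtain ⟨h, -, hh⟩ := exists_abs_fwdDiff_iter_dilate_sub_le hτ b R (mul_pos hε (abs_pos.2 hb))
  obtain ⟨G, hGW, hG⟩ := exists_mem_eq_fwdDiff_iter_dilate hinv hτW k h b
  refine ⟨(h ^ k * D)⁻¹ • G, W.smul_mem _ hGW, fun t ht => ?_⟩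
  have key : t ^ k - (h ^ k * D)⁻¹ * (Δ_[h * t])^[k] τ b =
      -(((h ^ k)⁻¹ * (Δ_[h * t])^[k] τ b - t ^ k * D) / D) := by
    field_simp
    ring
  rw [toContinuousMap_apply, eval_pow, eval_X, ContinuousMap.smul_apply, hG, smul_eq_mul, key,
    abs_neg, abs_div, div_le_iff₀ (abs_pos.2 hb)]
  exact hh t (by simpa using hR t ht)

theorem eq_top_of_forall_X_pow_mem (hW : IsClosed (W : Set C(ℝ, ℝ)))
    (hX : ∀ k : ℕ, (X ^ k : ℝ[X]).toContinuousMap ∈ W) : W = ⊤ := by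
  have hsep : (toContinuousMapAlgHom : ℝ[X] →ₐ[ℝ] C(ℝ, ℝ)).range.SeparatesPoints :=
    fun x y hxy => ⟨_, ⟨_, ⟨X, rfl⟩, rfl⟩, by simpa using hxy⟩
  have hpoly : ∀ p : ℝ[X], toContinuousMapAlgHom p ∈ W := fun p => by
    induction p using Polynomial.induction_on' with
    | add p q hp hq => exact map_add toContinuousMapAlgHom p q ▸ W.add_mem hp hq
    | monomial n c =>
      rw [← C_mul_X_pow_eq_monomial, ← smul_eq_C_mul, map_smul]
      exact W.smul_mem c (hX n)
  refine eq_top_iff.2 fun F _ => hW.closure_subset ?_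
  exact closure_mono (by rintro _ ⟨p, rfl⟩; exact hpoly p) (hsep.dense F)

theorem IsAffineInvariant.eq_top (hinv : IsAffineInvariant W)
    (hW : IsClosed (W : Set C(ℝ, ℝ))) {σ : C(ℝ, ℝ)} (hσW : σ ∈ W)
    (hσ : ¬ ∃ p : ℝ[X], ∀ t, σ t = p.eval t) : W = ⊤ := by
  refine eq_top_of_forall_X_pow_mem hW fun k => ?_
  obtain ⟨τ, hτW, hτ, hτ_np⟩ := exists_contDiff_not_poly_mem hW hinv hσW hσ k
  obtain ⟨b, hb⟩ : ∃ b, iteratedDeriv k τ b ≠ 0 := by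
    by_contra! h
    exact hτ_np (exists_poly_of_iteratedDeriv_eq_zero hτ h)
  exact toContinuousMap_X_pow_mem hW hinv hτW hτ hb

end AffineInvariant

noncomputable def polynomialFunctionsDegreeLE (m : ℕ) : Submodule ℝ C(ℝ, ℝ) :=
  (degreeLE ℝ m).map (toContinuousMapAlgHom : ℝ[X] →ₐ[ℝ] C(ℝ, ℝ)).toLinearMap

theorem mem_polynomialFunctionsDegreeLE {m : ℕ} {F : C(ℝ, ℝ)} :
    F ∈ polynomialFunctionsDegreeLE m ↔ ∃ p : ℝ[X], p.natDegree ≤ m ∧ p.toContinuousMap = F := by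
  simp [polynomialFunctionsDegreeLE, mem_degreeLE, natDegree_le_iff_degree_le]

theorem isClosed_polynomialFunctionsDegreeLE (m : ℕ) :
    IsClosed (polynomialFunctionsDegreeLE m : Set C(ℝ, ℝ)) :=
  have : FiniteDimensional ℝ (degreeLE ℝ m) :=
    (degreeLT_succ_eq_degreeLE (R := ℝ) (n := m)) ▸ (degreeLTEquiv ℝ (m + 1)).symm.finiteDimensional
  have : FiniteDimensional ℝ (polynomialFunctionsDegreeLE m) := Module.Finite.map _ _
  Submodule.closed_of_finiteDimensional _

theorem isAffineInvariant_polynomialFunctionsDegreeLE (m : ℕ) :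
    IsAffineInvariant (polynomialFunctionsDegreeLE m) := fun τ hτ s c => by
  obtain ⟨p, hp, rfl⟩ := mem_polynomialFunctionsDegreeLE.1 hτ
  refine mem_polynomialFunctionsDegreeLE.2 ⟨p.comp (C s * X + C c), ?_, ?_⟩
  · calc _ ≤ p.natDegree * (C s * X + C c).natDegree := natDegree_comp_le
      _ ≤ m * 1 := Nat.mul_le_mul hp natDegree_linear_le
      _ = m := mul_one m
  · ext t
    rw [ridge_real_apply]
    simp

theorem polynomialFunctionsDegreeLE_ne_top (m : ℕ) : polynomialFunctionsDegreeLE m ≠ ⊤ := by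
  intro htop
  obtain ⟨p, hp, hpX⟩ := mem_polynomialFunctionsDegreeLE.1
    (htop ▸ Submodule.mem_top : (X ^ (m + 1) : ℝ[X]).toContinuousMap ∈ _)
  have : p = X ^ (m + 1) := Polynomial.funext fun t => by simpa using congr($hpX t)
  rw [this, natDegree_X_pow] at hp
  omega

section RidgeSpan

variable {E : Type*} [NormedAddCommGroup E] [InnerProductSpace ℝ E]

noncomputable def ridgeProfiles (V : Submodule ℝ C(E, ℝ)) : Submodule ℝ C(ℝ, ℝ) :=
  ⨅ a : E, ⨅ b : ℝ, V.comap (ridge a b).toLinearMap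

theorem mem_ridgeProfiles {V : Submodule ℝ C(E, ℝ)} {τ : C(ℝ, ℝ)} :
    τ ∈ ridgeProfiles V ↔ ∀ a b, ridge a b τ ∈ V := by
  simp [ridgeProfiles]

theorem isClosed_ridgeProfiles {V : Submodule ℝ C(E, ℝ)} (hV : IsClosed (V : Set C(E, ℝ))) :
    IsClosed (ridgeProfiles V : Set C(ℝ, ℝ)) := by
  have : (ridgeProfiles V : Set C(ℝ, ℝ)) = ⋂ a, ⋂ b, ridge a b ⁻¹' (V : Set C(E, ℝ)) := by
    ext; simp [mem_ridgeProfiles]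
  rw [this]
  exact isClosed_iInter fun a => isClosed_iInter fun b => hV.preimage (continuous_ridge a b)

theorem isAffineInvariant_ridgeProfiles (V : Submodule ℝ C(E, ℝ)) :
    IsAffineInvariant (ridgeProfiles V) := fun τ hτ s c =>
  mem_ridgeProfiles.2 fun a b => by rw [ridge_ridge]; exact mem_ridgeProfiles.1 hτ _ _

variable (E) in
noncomputable def ridgeSpan (τ : C(ℝ, ℝ)) : Submodule ℝ C(E, ℝ) :=
  Submodule.span ℝ (range fun p : E × ℝ => ridge p.1 p.2 τ)

theorem ridge_mem_ridgeSpan (τ : C(ℝ, ℝ)) (a : E) (b : ℝ) : ridge a b τ ∈ ridgeSpan E τ :=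
  Submodule.subset_span ⟨(a, b), rfl⟩

noncomputable def expRidge (a : E) : C(E, ℝ) := ridge a 0 ⟨Real.exp, Real.continuous_exp⟩

theorem expRidge_apply (a x : E) : expRidge a x = Real.exp (inner ℝ a x) := by
  simp [expRidge]

theorem expRidge_add (a c : E) : expRidge (a + c) = expRidge a * expRidge c := by
  ext x
  simp [expRidge_apply, inner_add_left, Real.exp_add]

theorem separatesPoints_adjoin_range_expRidge :
    (Algebra.adjoin ℝ (range (expRidge : E → C(E, ℝ)))).SeparatesPoints :=
  fun x y hxy => ⟨_, ⟨_, Algebra.subset_adjoin ⟨x - y, rfl⟩, rfl⟩, fun h => by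
    have := Real.exp_injective (by simpa [expRidge_apply] using h)
    rw [← sub_eq_zero, ← inner_sub_right, inner_self_eq_zero, sub_eq_zero] at this
    exact hxy this⟩

theorem adjoin_range_expRidge_subset {V : Submodule ℝ C(E, ℝ)} (hV : ∀ a, expRidge a ∈ V) :
    (Algebra.adjoin ℝ (range (expRidge : E → C(E, ℝ))) : Set C(E, ℝ)) ⊆ V := by
  rw [← Subalgebra.coe_toSubmodule, Algebra.adjoin_eq_span, SetLike.coe_subset_coe,
    Submodule.span_le]
  intro F hF
  obtain ⟨a, rfl⟩ : F ∈ range expRidge := by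
    induction hF using Submonoid.closure_induction with
    | mem F hF => exact hF
    | one => exact ⟨0, by ext; simp [expRidge_apply]⟩
    | mul F G _ _ hF hG =>
      obtain ⟨a, rfl⟩ := hF
      obtain ⟨c, rfl⟩ := hG
      exact ⟨a + c, expRidge_add a c⟩
  exact hV a

theorem eq_top_of_forall_expRidge_mem {V : Submodule ℝ C(E, ℝ)} (hV : IsClosed (V : Set C(E, ℝ)))
    (hexp : ∀ a, expRidge a ∈ V) : V = ⊤ :=
  eq_top_iff.2 fun F _ => hV.closure_subset <| closure_mono (adjoin_range_expRidge_subset hexp)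
    (separatesPoints_adjoin_range_expRidge.dense F)

theorem dense_ridgeSpan {τ : C(ℝ, ℝ)} (hτ : ¬ ∃ p : ℝ[X], ∀ t, τ t = p.eval t) :
    Dense (ridgeSpan E τ : Set C(E, ℝ)) := by
  rw [Submodule.dense_iff_topologicalClosure_eq_top]
  set V := (ridgeSpan E τ).topologicalClosure
  have hV : IsClosed (V : Set C(E, ℝ)) := (ridgeSpan E τ).isClosed_topologicalClosure
  have hτV : τ ∈ ridgeProfiles V := mem_ridgeProfiles.2 fun a b =>
    (ridgeSpan E τ).le_topologicalClosure (ridge_mem_ridgeSpan τ a b)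
  have htop := (isAffineInvariant_ridgeProfiles V).eq_top (isClosed_ridgeProfiles hV) hτV hτ
  exact eq_top_of_forall_expRidge_mem hV fun a =>
    mem_ridgeProfiles.1 (htop ▸ Submodule.mem_top) a 0

theorem not_dense_ridgeSpan {W : Submodule ℝ C(ℝ, ℝ)} (hW : IsClosed (W : Set C(ℝ, ℝ)))
    (hinv : IsAffineInvariant W) (hW_ne_top : W ≠ ⊤) {τ : C(ℝ, ℝ)} (hτ : τ ∈ W) {e : E}
    (he : ‖e‖ = 1) :
    ¬ Dense (ridgeSpan E τ : Set C(E, ℝ)) := by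
  intro hdense
  -- Restrict to the line `ℝ e`, on which every ridge function becomes an affine reparametrisation.
  set ℓ : C(ℝ, E) := ⟨fun t => t • e, by fun_prop⟩
  set V := W.comap (ContinuousMap.compRightAlgHom ℝ ℝ ℓ).toLinearMap
  have hV : IsClosed (V : Set C(E, ℝ)) :=
    hW.preimage (ContinuousMap.compRightAlgHom_continuous ℝ ℝ ℓ)
  have hcomp (a : E) (b : ℝ) (g : C(ℝ, ℝ)) : (ridge a b g).comp ℓ = ridge (inner ℝ a e) b g := by
    ext t
    simp [ℓ, real_inner_smul_right]
  have hspan : ridgeSpan E τ ≤ V := Submodule.span_le.2 <| by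
    rintro _ ⟨⟨a, b⟩, rfl⟩
    change (ridge a b τ).comp ℓ ∈ W
    rw [hcomp]
    exact hinv τ hτ _ _
  refine hW_ne_top (eq_top_iff.2 fun g _ => ?_)
  have : (ridge e 0 g).comp ℓ ∈ W := hV.closure_subset (closure_mono hspan (hdense _))
  rw [hcomp, real_inner_self_eq_norm_sq, he] at this
  convert this
  ext t
  simp

end RidgeSpan

/-- The span of the ridge functions x ↦ σ(⟨a,x⟩ + b), a ∈ ℝⁿ, b ∈ ℝ, is dense in
C(ℝⁿ) (uniform convergence on compacta) iff σ is not a polynomial. -/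
theorem ridge_dense_iff_not_polynomial (n : ℕ) (hn : 1 ≤ n)
    (σ : ℝ → ℝ) (hσ : Continuous σ) :
    Dense (Submodule.span ℝ
        {F : C(EuclideanSpace ℝ (Fin n), ℝ) |
          ∃ (a : EuclideanSpace ℝ (Fin n)) (b : ℝ),
            ∀ x, F x = σ ((inner ℝ a x : ℝ) + b)} :
        Set C(EuclideanSpace ℝ (Fin n), ℝ)) ↔
      ¬ ∃ p : Polynomial ℝ, ∀ t : ℝ, σ t = p.eval t := by
  have hS : {F : C(EuclideanSpace ℝ (Fin n), ℝ) | ∃ a b, ∀ x, F x = σ ((inner ℝ a x : ℝ) + b)} =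
      range fun p : EuclideanSpace ℝ (Fin n) × ℝ => ridge p.1 p.2 ⟨σ, hσ⟩ := by
    ext F
    simp [ContinuousMap.ext_iff, eq_comm]
  rw [hS]
  change Dense (ridgeSpan (EuclideanSpace ℝ (Fin n)) ⟨σ, hσ⟩ :
    Set C(EuclideanSpace ℝ (Fin n), ℝ)) ↔ _
  refine ⟨fun hdense ⟨p, hp⟩ => ?_, dense_ridgeSpan (τ := ⟨σ, hσ⟩)⟩
  have hσp : (⟨σ, hσ⟩ : C(ℝ, ℝ)) ∈ polynomialFunctionsDegreeLE p.natDegree :=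
    mem_polynomialFunctionsDegreeLE.2 ⟨p, le_rfl, by ext t; simp [hp]⟩
  exact not_dense_ridgeSpan (isClosed_polynomialFunctionsDegreeLE _)
    (isAffineInvariant_polynomialFunctionsDegreeLE _) (polynomialFunctionsDegreeLE_ne_top _) hσp
    (by simp : ‖EuclideanSpace.single (⟨0, hn⟩ : Fin n) (1 : ℝ)‖ = 1) hdense
end
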